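/- arXiv:2007.07816 — 9 statements merged into one kernel-verified Lean document; each statement's English description precedes it below -/
import Mathlib

section
/- Let α < 1 < β be real numbers and let f be analytic on 𝔻 with f(0) = 0, f'(0) = 1 and f(z) ≠ 0 for z ∈ 𝔻 \ {0}, such that α < Re(zf'(z)/f(z)) < β for all z ∈ 𝔻 \ {0} (extended by the value 1 at z = 0). Let r₀ ∈ (0,1) be the smallest positive root of the equation ((β−α)/π)·( log( (1 + √(2(1 + cos(2π(1−α)/(β−α))))·r + r²) / (1 − r²) ) + 2·arctan( r/(1−r) ) ) = 1/e. Then for every z with 0 < |z| < r₀ there exists w ∈ ℂ with |w| < 1 such that zf'(z)/f(z) = 1 + w·e^w; that is, f belongs to 𝒮*_℘ on the disk |z| < r₀. -/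
/-!
The quotient `q(z) = z f'(z) / f(z)` is holomorphic on the disk, `q(0) = 1`, and `q` takes values
in the strip `α < Re w < β`. The affine map `w ↦ iπ (w - (α + β) / 2) / (β - α)` sends that strip
onto `|Im ξ| < π / 2`, which `ξ ↦ tanh (ξ / 2)` maps into the disk, with left inverse
`ζ ↦ log ((1 + ζ) / (1 - ζ))`. Schwarz's lemma, applied after a disk automorphism moving the image
of `0` to `0`, and integration of the hyperbolic density `2 / (1 - |v|²)` along a radius give
`|q(z) - 1| ≤ (β - α) / π · log ((1 + |z|) / (1 - |z|))`, and this is at most `E(|z|)`, which stays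
below `1 / e` on `[0, r₀)` by the intermediate value theorem. Finally `w ↦ w e^w` is open and
`|w e^w| ≥ 1 / e` on the unit circle, so its image of the unit disk contains the disk of radius
`1 / e`.
-/

open Complex Metric Set

open scoped Real ComplexConjugate

theorem norm_sub_le_log_of_norm_deriv_le {g g' : ℂ → ℂ}
    (hg : ∀ v : ℂ, ‖v‖ < 1 → HasDerivAt g (g' v) v)
    (hbound : ∀ v : ℂ, ‖v‖ < 1 → ‖g' v‖ ≤ 2 / (1 - ‖v‖ ^ 2)) {u : ℂ} (hu : ‖u‖ < 1) :
    ‖g u - g 0‖ ≤ Real.log ((1 + ‖u‖) / (1 - ‖u‖)) := by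
  set s := ‖u‖
  have hs : 0 ≤ s := norm_nonneg u
  have hτu : ∀ τ ∈ Icc (0 : ℝ) 1, ‖(τ : ℂ) * u‖ = τ * s := fun τ hτ => by
    rw [norm_mul, norm_real, Real.norm_of_nonneg hτ.1]
  have hτs : ∀ τ ∈ Icc (0 : ℝ) 1, τ * s < 1 := fun τ hτ => by nlinarith [hτ.1, hτ.2]
  have hF : ∀ τ ∈ Icc (0 : ℝ) 1,
      HasDerivAt (fun τ : ℝ => g (τ * u) - g 0) (g' (τ * u) * u) τ := fun τ hτ => by
    have hline : HasDerivAt (fun τ : ℝ => (τ : ℂ) * u) (1 * u) τ :=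
      (hasDerivAt_id τ).ofReal_comp.mul_const u
    exact ((hg _ ((hτu τ hτ).trans_lt (hτs τ hτ))).comp τ hline).sub_const _ |>.congr_deriv
      (by ring)
  have hB : ∀ τ ∈ Icc (0 : ℝ) 1, HasDerivAt (fun τ => Real.log (1 + s * τ) - Real.log (1 - s * τ))
      (s / (1 + s * τ) + s / (1 - s * τ)) τ := fun τ hτ => by
    have h1 : HasDerivAt (fun τ => 1 + s * τ) s τ := by
      simpa using ((hasDerivAt_id τ).const_mul s).const_add 1
    have h2 : HasDerivAt (fun τ => 1 - s * τ) (-s) τ := by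
      simpa using ((hasDerivAt_id τ).const_mul s).const_sub 1
    refine ((h1.log (by nlinarith [hτ.1, hτ.2])).sub
      (h2.log (by nlinarith [hτ.1, hτ.2]))).congr_deriv ?_
    ring
  have key := image_norm_le_of_norm_deriv_right_le_deriv_boundary'
    (fun τ hτ => (hF τ hτ).continuousAt.continuousWithinAt)
    (fun τ hτ => (hF τ (Ico_subset_Icc_self hτ)).hasDerivWithinAt)
    (by simp) (fun τ hτ => (hB τ hτ).continuousAt.continuousWithinAt)
    (fun τ hτ => (hB τ (Ico_subset_Icc_self hτ)).hasDerivWithinAt)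
    ?_ (right_mem_Icc.mpr zero_le_one)
  · simpa [Real.log_div (by linarith : 1 + s ≠ 0) (by linarith : 1 - s ≠ 0)] using key
  intro τ hτ
  have hτ' := Ico_subset_Icc_self hτ
  have h1 : 0 < 1 + s * τ := by nlinarith [hτ'.1]
  have h2 : 0 < 1 - s * τ := by nlinarith [hτs τ hτ']
  calc ‖g' (τ * u) * u‖ ≤ 2 / (1 - (τ * s) ^ 2) * s := by
        rw [norm_mul, ← hτu τ hτ']
        exact mul_le_mul_of_nonneg_right (hbound _ ((hτu τ hτ').trans_lt (hτs τ hτ'))) hs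
    _ = s / (1 + s * τ) + s / (1 - s * τ) := by
        rw [show 1 - (τ * s) ^ 2 = (1 + s * τ) * (1 - s * τ) by ring]
        field_simp
        ring

namespace Complex

noncomputable def mobius (c v : ℂ) : ℂ := (v + c) / (1 + conj c * v)

theorem one_add_conj_mul_ne_zero {c v : ℂ} (hc : ‖c‖ < 1) (hv : ‖v‖ < 1) :
    1 + conj c * v ≠ 0 := by
  intro h
  have : ‖conj c * v‖ = 1 := by rw [eq_neg_of_add_eq_zero_right h, norm_neg, norm_one]
  rw [norm_mul, norm_conj] at this
  nlinarith [norm_nonneg c, norm_nonneg v]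

theorem one_sub_sq_norm_mobius {c v : ℂ} (hc : ‖c‖ < 1) (hv : ‖v‖ < 1) :
    1 - ‖mobius c v‖ ^ 2 = (1 - ‖c‖ ^ 2) * (1 - ‖v‖ ^ 2) / ‖1 + conj c * v‖ ^ 2 := by
  have hden := one_add_conj_mul_ne_zero hc hv
  rw [eq_div_iff (by positivity), mobius, norm_div, div_pow, sub_mul,
    div_mul_cancel₀ _ (by positivity)]
  simp only [← normSq_eq_norm_sq, normSq_apply, add_re, add_im, mul_re, mul_im, conj_re, conj_im,
    one_re, one_im]
  ring

theorem norm_mobius_lt_one {c v : ℂ} (hc : ‖c‖ < 1) (hv : ‖v‖ < 1) : ‖mobius c v‖ < 1 := by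
  have hden := one_add_conj_mul_ne_zero hc hv
  have hc2 : 0 < 1 - ‖c‖ ^ 2 := by nlinarith [norm_nonneg c]
  have hv2 : 0 < 1 - ‖v‖ ^ 2 := by nlinarith [norm_nonneg v]
  have hpos : 0 < 1 - ‖mobius c v‖ ^ 2 := by
    rw [one_sub_sq_norm_mobius hc hv]
    exact div_pos (mul_pos hc2 hv2) (by positivity)
  nlinarith [norm_nonneg (mobius c v)]

theorem mobius_zero_right (c : ℂ) : mobius c 0 = c := by simp [mobius]

theorem mobius_neg_self (c : ℂ) : mobius (-c) c = 0 := by simp [mobius]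

theorem mobius_mobius_neg {c ζ : ℂ} (hc : ‖c‖ < 1) (hζ : ‖ζ‖ < 1) :
    mobius c (mobius (-c) ζ) = ζ := by
  have hc' : ‖-c‖ < 1 := by rwa [norm_neg]
  have h1 := one_add_conj_mul_ne_zero hc' hζ
  have h2 := one_add_conj_mul_ne_zero hc (norm_mobius_lt_one hc' hζ)
  rw [mobius, div_eq_iff h2]
  simp only [mobius, map_neg, neg_mul, ← sub_eq_add_neg] at h1 ⊢
  linear_combination div_mul_cancel₀ (ζ - c) h1

theorem hasDerivAt_mobius {c v : ℂ} (hc : ‖c‖ < 1) (hv : ‖v‖ < 1) :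
    HasDerivAt (mobius c) (((1 - ‖c‖ ^ 2 : ℝ) : ℂ) / (1 + conj c * v) ^ 2) v := by
  have hden := one_add_conj_mul_ne_zero hc hv
  have h : HasDerivAt (fun v => (v + c) / (1 + conj c * v))
      ((1 * (1 + conj c * v) - (v + c) * (conj c * 1)) / (1 + conj c * v) ^ 2) v :=
    ((hasDerivAt_id' v).add_const c).div (((hasDerivAt_id' v).const_mul (conj c)).const_add 1) hden
  refine h.congr_deriv ?_
  rw [ofReal_sub, ofReal_one, ← normSq_eq_norm_sq, ← mul_conj]
  ring

noncomputable def logCayley (ζ : ℂ) : ℂ := log ((1 + ζ) / (1 - ζ))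

theorem re_one_add_div_one_sub_pos {ζ : ℂ} (hζ : ‖ζ‖ < 1) : 0 < ((1 + ζ) / (1 - ζ)).re := by
  have hne : 1 - ζ ≠ 0 := fun h => by simp [← sub_eq_zero.mp h] at hζ
  have hsq : ζ.re * ζ.re + ζ.im * ζ.im < 1 := by
    rw [← normSq_apply, normSq_eq_norm_sq]; nlinarith [norm_nonneg ζ]
  rw [div_re, ← add_div]
  apply div_pos _ (normSq_pos.mpr hne)
  simp only [add_re, sub_re, add_im, sub_im, one_re, one_im]
  nlinarith

theorem hasDerivAt_logCayley {ζ : ℂ} (hζ : ‖ζ‖ < 1) :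
    HasDerivAt logCayley (2 / ((1 + ζ) * (1 - ζ))) ζ := by
  have h1 : 1 + ζ ≠ 0 := fun h => by simp [eq_neg_of_add_eq_zero_right h] at hζ
  have h2 : 1 - ζ ≠ 0 := fun h => by simp [← sub_eq_zero.mp h] at hζ
  have hq : HasDerivAt (fun ζ => (1 + ζ) / (1 - ζ))
      ((1 * (1 - ζ) - (1 + ζ) * (-1)) / (1 - ζ) ^ 2) ζ :=
    ((hasDerivAt_id' ζ).const_add 1).div ((hasDerivAt_id' ζ).const_sub 1) h2
  refine (hq.clog (Or.inl (re_one_add_div_one_sub_pos hζ))).congr_deriv ?_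
  field_simp
  ring

theorem norm_two_div_one_add_mul_one_sub_le {ζ : ℂ} (hζ : ‖ζ‖ < 1) :
    ‖2 / ((1 + ζ) * (1 - ζ))‖ ≤ 2 / (1 - ‖ζ‖ ^ 2) := by
  have hlow : 1 - ‖ζ‖ ^ 2 ≤ ‖(1 + ζ) * (1 - ζ)‖ := by
    calc 1 - ‖ζ‖ ^ 2 = ‖(1 : ℂ)‖ - ‖ζ ^ 2‖ := by simp
      _ ≤ ‖(1 : ℂ) - ζ ^ 2‖ := norm_sub_norm_le _ _
      _ = ‖(1 + ζ) * (1 - ζ)‖ := by ring_nf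
  rw [norm_div, RCLike.norm_ofNat]
  exact div_le_div_of_nonneg_left zero_le_two (by nlinarith [norm_nonneg ζ]) hlow

noncomputable def tanhHalf (ξ : ℂ) : ℂ := (exp ξ - 1) / (exp ξ + 1)

theorem re_exp_pos {ξ : ℂ} (hξ : |ξ.im| < π / 2) : 0 < (exp ξ).re := by
  rw [exp_re]
  exact mul_pos (Real.exp_pos _) (Real.cos_pos_of_mem_Ioo (abs_lt.mp hξ))

theorem exp_add_one_ne_zero {ξ : ℂ} (hξ : |ξ.im| < π / 2) : exp ξ + 1 ≠ 0 := fun h => by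
  have := congrArg re h
  simp only [add_re, one_re, zero_re] at this
  linarith [re_exp_pos hξ]

theorem norm_tanhHalf_lt_one {ξ : ℂ} (hξ : |ξ.im| < π / 2) : ‖tanhHalf ξ‖ < 1 := by
  have hre := re_exp_pos hξ
  rw [tanhHalf, norm_div, div_lt_one (norm_pos_iff.mpr (exp_add_one_ne_zero hξ)),
    ← sq_lt_sq₀ (norm_nonneg _) (norm_nonneg _), ← normSq_eq_norm_sq, ← normSq_eq_norm_sq]
  simp only [normSq_apply, sub_re, sub_im, add_re, add_im, one_re, one_im]
  nlinarith

theorem logCayley_tanhHalf {ξ : ℂ} (hξ : |ξ.im| < π / 2) : logCayley (tanhHalf ξ) = ξ := by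
  have h := exp_add_one_ne_zero hξ
  have hcayley : (1 + tanhHalf ξ) / (1 - tanhHalf ξ) = exp ξ := by
    rw [tanhHalf]
    field_simp
    ring
  obtain ⟨hlo, hhi⟩ := abs_lt.mp hξ
  rw [logCayley, hcayley, log_exp (by linarith [Real.pi_pos]) (by linarith [Real.pi_pos])]

theorem norm_logCayley_mobius_sub_le {c u : ℂ} (hc : ‖c‖ < 1) (hu : ‖u‖ < 1) :
    ‖logCayley (mobius c u) - logCayley c‖ ≤ Real.log ((1 + ‖u‖) / (1 - ‖u‖)) := by
  have hderiv : ∀ v : ℂ, ‖v‖ < 1 → HasDerivAt (fun v => logCayley (mobius c v))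
      (2 / ((1 + mobius c v) * (1 - mobius c v)) *
        (((1 - ‖c‖ ^ 2 : ℝ) : ℂ) / (1 + conj c * v) ^ 2)) v :=
    fun v hv => (hasDerivAt_logCayley (norm_mobius_lt_one hc hv)).comp v (hasDerivAt_mobius hc hv)
  have hbound : ∀ v : ℂ, ‖v‖ < 1 → ‖2 / ((1 + mobius c v) * (1 - mobius c v)) *
      (((1 - ‖c‖ ^ 2 : ℝ) : ℂ) / (1 + conj c * v) ^ 2)‖ ≤ 2 / (1 - ‖v‖ ^ 2) := by
    intro v hv
    have hden := one_add_conj_mul_ne_zero hc hv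
    have hm := norm_mobius_lt_one hc hv
    have hc2 : 0 < 1 - ‖c‖ ^ 2 := by nlinarith [norm_nonneg c]
    have hm2 : 0 < 1 - ‖mobius c v‖ ^ 2 := by nlinarith [norm_nonneg (mobius c v)]
    rw [norm_mul, norm_div (((1 - ‖c‖ ^ 2 : ℝ) : ℂ)), norm_pow, norm_real,
      Real.norm_of_nonneg hc2.le]
    calc _ ≤ 2 / (1 - ‖mobius c v‖ ^ 2) * ((1 - ‖c‖ ^ 2) / ‖1 + conj c * v‖ ^ 2) := by
          gcongr
          exact norm_two_div_one_add_mul_one_sub_le hm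
      _ = 2 / (1 - ‖v‖ ^ 2) := by
          rw [one_sub_sq_norm_mobius hc hv]
          field_simp
  simpa [mobius_zero_right] using norm_sub_le_log_of_norm_deriv_le hderiv hbound hu

end Complex

theorem Real.log_one_add_div_one_sub_le_of_le {s t : ℝ} (hs : -1 < s) (hst : s ≤ t) (ht : t < 1) :
    Real.log ((1 + s) / (1 - s)) ≤ Real.log ((1 + t) / (1 - t)) := by
  apply Real.log_le_log (div_pos (by linarith) (by linarith))
  rw [div_le_div_iff₀ (by linarith) (by linarith)]
  nlinarith

theorem norm_sub_le_log_of_abs_im_lt {p : ℂ → ℂ} (hp : DifferentiableOn ℂ p (ball 0 1))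
    (hstrip : ∀ z ∈ ball (0 : ℂ) 1, |(p z).im| < π / 2) {z : ℂ} (hz : ‖z‖ < 1) :
    ‖p z - p 0‖ ≤ Real.log ((1 + ‖z‖) / (1 - ‖z‖)) := by
  have hp0 := hstrip 0 (mem_ball_self one_pos)
  set c := tanhHalf (p 0)
  have hc : ‖c‖ < 1 := norm_tanhHalf_lt_one hp0
  have hc' : ‖-c‖ < 1 := by rwa [norm_neg]
  set h := fun z => mobius (-c) (tanhHalf (p z))
  have hh : DifferentiableOn ℂ h (ball 0 1) := by
    intro w hw
    have hT : DifferentiableAt ℂ tanhHalf (p w) :=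
      ((differentiableAt_exp.sub_const 1).div (differentiableAt_exp.add_const 1)
        (exp_add_one_ne_zero (hstrip w hw)))
    have hM := (hasDerivAt_mobius hc' (norm_tanhHalf_lt_one (hstrip w hw))).differentiableAt
    exact hM.comp_differentiableWithinAt w (hT.comp_differentiableWithinAt w (hp w hw))
  have hmaps : MapsTo h (ball 0 1) (closedBall 0 1) := fun w hw =>
    mem_closedBall_zero_iff.mpr (norm_mobius_lt_one hc' (norm_tanhHalf_lt_one (hstrip w hw))).le
  have hschwarz : ‖h z‖ ≤ ‖z‖ :=
    norm_le_norm_of_mapsTo_ball hh hmaps (mobius_neg_self c) hz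
  have hpz : p z = logCayley (mobius c (h z)) := by
    rw [mobius_mobius_neg hc (norm_tanhHalf_lt_one (hstrip z (mem_ball_zero_iff.mpr hz))),
      logCayley_tanhHalf (hstrip z (mem_ball_zero_iff.mpr hz))]
  rw [hpz, ← logCayley_tanhHalf hp0]
  exact (norm_logCayley_mobius_sub_le hc (hschwarz.trans_lt hz)).trans
    (Real.log_one_add_div_one_sub_le_of_le (by linarith [norm_nonneg (h z)]) hschwarz hz)

theorem norm_sub_le_of_re_mem_Ioo {q : ℂ → ℂ} {α β : ℝ} (hq : DifferentiableOn ℂ q (ball 0 1))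
    (hstrip : ∀ z ∈ ball (0 : ℂ) 1, (q z).re ∈ Ioo α β) {z : ℂ} (hz : ‖z‖ < 1) :
    ‖q z - q 0‖ ≤ (β - α) / π * Real.log ((1 + ‖z‖) / (1 - ‖z‖)) := by
  have hαβ : 0 < β - α := by
    have := hstrip 0 (mem_ball_self one_pos); linarith [this.1, this.2]
  set k := π / (β - α) with hk_def
  have hk : 0 < k := by positivity
  let p : ℂ → ℂ := fun w => I * k * (q w - ((α + β) / 2 : ℝ))
  have hp : DifferentiableOn ℂ p (ball 0 1) := (hq.sub_const _).const_mul _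
  have hpstrip : ∀ w ∈ ball (0 : ℂ) 1, |(p w).im| < π / 2 := fun w hw => by
    have h := hstrip w hw
    have : (p w).im = k * ((q w).re - (α + β) / 2) := by simp [p]
    rw [this, abs_mul, abs_of_pos hk]
    calc k * |(q w).re - (α + β) / 2| < k * ((β - α) / 2) := by
          gcongr
          exact abs_lt.mpr ⟨by linarith [h.1], by linarith [h.2]⟩
      _ = π / 2 := by rw [hk_def]; field_simp
  have hpq : ‖p z - p 0‖ = k * ‖q z - q 0‖ := by
    simp only [p, ← mul_sub, sub_sub_sub_cancel_right, norm_mul, norm_I, norm_real,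
      Real.norm_of_nonneg hk.le, one_mul]
  calc ‖q z - q 0‖ = (β - α) / π * ‖p z - p 0‖ := by rw [hpq, hk_def]; field_simp
    _ ≤ (β - α) / π * Real.log ((1 + ‖z‖) / (1 - ‖z‖)) := by
        gcongr
        exact norm_sub_le_log_of_abs_im_lt hp hpstrip hz

theorem exists_eq_mul_deriv_div {f : ℂ → ℂ} (hf : AnalyticOn ℂ f (ball 0 1)) (hf0 : f 0 = 0)
    (hf'0 : deriv f 0 = 1) (hfne : ∀ z ∈ ball (0 : ℂ) 1, z ≠ 0 → f z ≠ 0) :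
    ∃ q : ℂ → ℂ, DifferentiableOn ℂ q (ball 0 1) ∧ q 0 = 1 ∧
      ∀ z ∈ ball (0 : ℂ) 1, z ≠ 0 → q z = z * deriv f z / f z := by
  have hfA : AnalyticOnNhd ℂ f (ball 0 1) := isOpen_ball.analyticOn_iff_analyticOnNhd.mp hf
  have hslope : ∀ z, z ≠ 0 → dslope f 0 z = f z / z := fun z hz => by
    rw [dslope_of_ne f hz, slope_def_field, hf0, sub_zero, sub_zero]
  refine ⟨fun z => deriv f z / dslope f 0 z, ?_, by simp [hf'0], fun z hz hz0 => ?_⟩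
  · refine hfA.deriv.differentiableOn.div
      ((differentiableOn_dslope (isOpen_ball.mem_nhds (mem_ball_self one_pos))).mpr
        hfA.differentiableOn) fun z hz => ?_
    rcases eq_or_ne z 0 with rfl | hz0
    · simp [hf'0]
    · rw [hslope z hz0]
      exact div_ne_zero (hfne z hz hz0) hz0
  · simp only [hslope z hz0]
    field_simp [hfne z hz hz0]

theorem Real.div_one_add_sq_le_arctan {y : ℝ} (hy : 0 ≤ y) : y / (1 + y ^ 2) ≤ Real.arctan y := by
  have hsin : Real.sin (2 * Real.arctan y) = 2 * (y / (1 + y ^ 2)) := by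
    rw [Real.sin_two_mul, Real.sin_arctan, Real.cos_arctan, mul_assoc, div_mul_div_comm, mul_one,
      Real.mul_self_sqrt (by positivity)]
  have := Real.sin_le (by linarith [Real.arctan_nonneg.mpr hy] : 0 ≤ 2 * Real.arctan y)
  linarith

theorem Real.log_one_add_div_one_sub_le_log_add_two_arctan {s c : ℝ} (hs0 : 0 ≤ s) (hs1 : s < 1)
    (hc : 0 ≤ c) :
    Real.log ((1 + s) / (1 - s)) ≤
      Real.log ((1 + c * s + s ^ 2) / (1 - s ^ 2)) + 2 * Real.arctan (s / (1 - s)) := by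
  have hA : 0 < 1 + c * s + s ^ 2 := by positivity
  have hB : 0 < 1 - s ^ 2 := by nlinarith
  have hsplit : (1 + s) / (1 - s) =
      (1 + c * s + s ^ 2) / (1 - s ^ 2) * ((1 + s) ^ 2 / (1 + c * s + s ^ 2)) := by
    rw [show 1 - s ^ 2 = (1 + s) * (1 - s) by ring]
    field_simp
  have hlog : Real.log ((1 + s) ^ 2 / (1 + c * s + s ^ 2)) ≤ 2 * (s / (1 + s ^ 2)) := by
    refine (Real.log_le_sub_one_of_pos (by positivity)).trans ?_
    rw [div_sub_one hA.ne', div_le_iff₀ hA, mul_div_assoc', div_mul_eq_mul_div,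
      le_div_iff₀ (by positivity)]
    nlinarith [mul_nonneg hc hs0, mul_nonneg (mul_nonneg hc hs0) (sq_nonneg s)]
  have harctan : s / (1 + s ^ 2) ≤ Real.arctan (s / (1 - s)) :=
    (Real.div_one_add_sq_le_arctan hs0).trans (Real.arctan_le_arctan_iff.mpr
      (le_div_self hs0 (by linarith) (by linarith)))
  rw [hsplit, Real.log_mul (by positivity) (by positivity)]
  linarith

theorem continuousOn_log_div_add_two_arctan {c : ℝ} (hc : 0 ≤ c) :
    ContinuousOn (fun r => Real.log ((1 + c * r + r ^ 2) / (1 - r ^ 2)) +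
      2 * Real.arctan (r / (1 - r))) (Ico 0 1) := by
  have h1 : ∀ r ∈ Ico (0 : ℝ) 1, 1 - r ≠ 0 := fun r hr => by linarith [hr.2]
  have h2 : ∀ r ∈ Ico (0 : ℝ) 1, 1 - r ^ 2 ≠ 0 := fun r hr => by nlinarith [hr.1, hr.2]
  have h3 : ∀ r ∈ Ico (0 : ℝ) 1, (1 + c * r + r ^ 2) / (1 - r ^ 2) ≠ 0 := fun r hr =>
    div_ne_zero (by nlinarith [hr.1, mul_nonneg hc hr.1]) (h2 r hr)
  fun_prop (disch := assumption)

theorem lt_of_forall_ne_of_continuousOn {E : ℝ → ℝ} {a b y : ℝ} (hab : a ≤ b)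
    (hcont : ContinuousOn E (Icc a b)) (ha : E a < y) (hne : ∀ r ∈ Ioc a b, E r ≠ y) : E b < y := by
  by_contra! h
  obtain ⟨r, hr, hEr⟩ := intermediate_value_Icc hab hcont ⟨ha.le, h⟩
  exact hne r ⟨hr.1.lt_of_ne (by rintro rfl; exact ha.ne hEr), hr.2⟩ hEr

theorem Metric.ball_subset_image_ball {X F : Type*} [MetricSpace X] [ProperSpace X]
    [NormedAddCommGroup F] [NormedSpace ℝ F] {g : X → F} {x : X} {R ρ : ℝ} (hR : 0 < R) (hρ : 0 < ρ)
    (hg : ContinuousOn g (closedBall x R)) (hopen : IsOpen (g '' ball x R))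
    (hsphere : ∀ w ∈ sphere x R, ρ ≤ dist (g w) (g x)) : ball (g x) ρ ⊆ g '' ball x R := by
  have hclosed : IsClosed (g '' closedBall x R) :=
    ((isCompact_closedBall x R).image_of_continuousOn hg).isClosed
  refine (convex_ball (g x) ρ).isPreconnected.subset_left_of_subset_union hopen
    hclosed.isOpen_compl (disjoint_compl_right.mono_left (image_mono ball_subset_closedBall))
    (fun y hy => ?_) ⟨g x, mem_ball_self hρ, x, mem_ball_self hR, rfl⟩
  by_cases hy' : y ∈ g '' closedBall x R
  · obtain ⟨w, hw, rfl⟩ := hy'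
    rw [← ball_union_sphere] at hw
    rcases hw with hw | hw
    · exact Or.inl ⟨w, hw, rfl⟩
    · exact absurd (hsphere w hw) (not_le.mpr (mem_ball.mp hy))
  · exact Or.inr hy'

theorem ball_subset_image_mul_exp :
    ball (0 : ℂ) (1 / Real.exp 1) ⊆ (fun w => w * exp w) '' ball 0 1 := by
  have hg : AnalyticOnNhd ℂ (fun w : ℂ => w * exp w) univ := by
    intro w _; fun_prop
  have hopen : IsOpenMap (fun w : ℂ => w * exp w) := by
    refine hg.is_constant_or_isOpenMap.resolve_left fun ⟨w, hw⟩ => ?_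
    have := (hw 1).trans (hw 0).symm
    simp at this
  have hsphere : ∀ w ∈ sphere (0 : ℂ) 1, 1 / Real.exp 1 ≤ dist (w * exp w) (0 * exp 0) := by
    intro w hw
    rw [mem_sphere_zero_iff_norm] at hw
    have hre : -1 ≤ w.re := by linarith [(abs_le.mp (hw ▸ abs_re_le_norm w)).1]
    rw [zero_mul, dist_zero_right, norm_mul, norm_exp, hw, one_mul, one_div, ← Real.exp_neg]
    exact Real.exp_le_exp.mpr hre
  simpa using Metric.ball_subset_image_ball (x := 0) one_pos (by positivity) (by fun_prop)
    (hopen _ isOpen_ball) hsphere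

theorem stmt_0_general (α β : ℝ) (hα : α < 1) (hβ : 1 < β)
    (f : ℂ → ℂ) (hf : AnalyticOn ℂ f (ball (0 : ℂ) 1))
    (hf0 : f 0 = 0) (hf'0 : deriv f 0 = 1)
    (hfne : ∀ z ∈ ball (0 : ℂ) 1, z ≠ 0 → f z ≠ 0)
    (hstrip : ∀ z ∈ ball (0 : ℂ) 1, z ≠ 0 →
      α < (z * deriv f z / f z).re ∧ (z * deriv f z / f z).re < β)
    (E : ℝ → ℝ)
    (hE : ∀ r : ℝ, E r = ((β - α) / Real.pi) *
      (Real.log ((1 + Real.sqrt (2 * (1 + Real.cos (2 * Real.pi * (1 - α) / (β - α)))) * r + r ^ 2)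
          / (1 - r ^ 2))
        + 2 * Real.arctan (r / (1 - r))))
    (r₀ : ℝ) (hr₀lt : r₀ < 1)
    (hsmallest : ∀ r : ℝ, 0 < r → r < r₀ → E r ≠ 1 / Real.exp 1) :
    ∀ z : ℂ, 0 < ‖z‖ → ‖z‖ < r₀ →
      ∃ w : ℂ, ‖w‖ < 1 ∧ z * deriv f z / f z = 1 + w * Complex.exp w := by
  intro z hz0 hzr
  have hz1 : ‖z‖ < 1 := hzr.trans hr₀lt
  obtain ⟨q, hq, hq0, hqf⟩ := exists_eq_mul_deriv_div hf hf0 hf'0 hfne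
  have hqstrip : ∀ w ∈ ball (0 : ℂ) 1, (q w).re ∈ Ioo α β := fun w hw => by
    rcases eq_or_ne w 0 with rfl | hw0
    · simpa [hq0] using ⟨hα, hβ⟩
    · rw [hqf w hw hw0]
      exact hstrip w hw hw0
  have hc₀ := Real.sqrt_nonneg (2 * (1 + Real.cos (2 * π * (1 - α) / (β - α))))
  have hbound : ‖q z - 1‖ ≤ E ‖z‖ := by
    rw [hE, ← hq0]
    refine (norm_sub_le_of_re_mem_Ioo hq hqstrip hz1).trans ?_
    have hK : 0 ≤ (β - α) / π := div_nonneg (by linarith) Real.pi_pos.le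
    gcongr
    exact Real.log_one_add_div_one_sub_le_log_add_two_arctan (norm_nonneg z) hz1 hc₀
  have hEz : E ‖z‖ < 1 / Real.exp 1 := by
    refine lt_of_forall_ne_of_continuousOn (norm_nonneg z) ?_ (by simp [hE]; positivity)
      fun r hr => hsmallest r hr.1 (hr.2.trans_lt hzr)
    rw [funext hE]
    exact (continuousOn_const.mul (continuousOn_log_div_add_two_arctan hc₀)).mono
      (Icc_subset_Ico_right hz1)
  obtain ⟨w, hw, hwq⟩ := ball_subset_image_mul_exp (mem_ball_zero_iff.mpr (hbound.trans_lt hEz))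
  refine ⟨w, mem_ball_zero_iff.mp hw, ?_⟩
  rw [← hqf z (mem_ball_zero_iff.mpr hz1) (norm_pos_iff.mp hz0)]
  exact eq_add_of_sub_eq' hwq.symm

/-- If `f ∈ S(α,β)` (Kuroki–Owa strip class), then `f ∈ 𝒮*_℘` on the disk
`|z| < r₀`, where `r₀` is the smallest positive root of the given equation. -/
theorem stmt_0 (α β : ℝ) (hα : α < 1) (hβ : 1 < β)
    (f : ℂ → ℂ) (hf : AnalyticOn ℂ f (ball (0 : ℂ) 1))
    (hf0 : f 0 = 0) (hf'0 : deriv f 0 = 1)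
    (hfne : ∀ z ∈ ball (0 : ℂ) 1, z ≠ 0 → f z ≠ 0)
    (hstrip : ∀ z ∈ ball (0 : ℂ) 1, z ≠ 0 →
      α < (z * deriv f z / f z).re ∧ (z * deriv f z / f z).re < β)
    (E : ℝ → ℝ)
    (hE : ∀ r : ℝ, E r = ((β - α) / Real.pi) *
      (Real.log ((1 + Real.sqrt (2 * (1 + Real.cos (2 * Real.pi * (1 - α) / (β - α)))) * r + r ^ 2)
          / (1 - r ^ 2))
        + 2 * Real.arctan (r / (1 - r))))
    (r₀ : ℝ) (hr₀pos : 0 < r₀) (hr₀lt : r₀ < 1)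
    (hroot : E r₀ = 1 / Real.exp 1)
    (hsmallest : ∀ r : ℝ, 0 < r → r < r₀ → E r ≠ 1 / Real.exp 1) :
    ∀ z : ℂ, 0 < ‖z‖ → ‖z‖ < r₀ →
      ∃ w : ℂ, ‖w‖ < 1 ∧ z * deriv f z / f z = 1 + w * Complex.exp w :=
  stmt_0_general α β hα hβ f hf hf0 hf'0 hfne hstrip E hE r₀ hr₀lt hsmallest
end

section
/- Let Φ : ℂ → ℂ be a nonconstant entire function and let z₀ ∈ ℂ with 0 < |z₀| < 1. For each g in the class 𝒮*_℘ (normalized analytic g on 𝔻 with g(z) ≠ 0 for z ≠ 0 and zg'(z)/g(z) ≺ 1 + z e^z), let L_g be the unique analytic function on 𝔻 with L_g(0) = 0 and exp(L_g(z)) = g(z)/z. Suppose f ∈ 𝒮*_℘ attains the maximum: Re Φ(L_g(z₀)) ≤ Re Φ(L_f(z₀)) for all g ∈ 𝒮*_℘. Then there exists ζ ∈ ℂ with |ζ| = 1 such that f(z) = z·exp(e^{ζz} − 1) for all z ∈ 𝔻. -/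
/-!
The subordination `zf'/f ≺ 1 + z e^z` says `z L_f'(z) = ω(z) e^{ω(z)}` for a Schwarz function
`ω`. Then `1 + L_f = e^H` with `H` analytic, `H 0 = 0` and `|H| < 1`: at a point of least modulus
where `|H| = 1`, Jack's lemma gives `z H'(z) = k H(z)` with `k ≥ 1`, and `ω e^ω = k H e^H` is
impossible when `|ω| < 1 = |H|`. So `L_f = e^H - 1` with `|H(z₀)| ≤ |z₀|` by the Schwarz lemma.
Every `e^u - 1` with `|u| ≤ |z₀|` is some `L_g(z₀)`, for `g(z) = z exp(e^{uz/z₀} - 1)`. If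
`|H(z₀)| < |z₀|`, then `Re Φ` would have a local maximum at `L_f(z₀)`, which the open mapping
theorem forbids for a nonconstant entire `Φ`. Hence `|H(z₀)| = |z₀|`, and the equality case of
the Schwarz lemma gives `H(z) = ζ z` with `|ζ| = 1`.
-/

open Complex Metric

/-- Membership in the class `𝒮*_℘` of cardioid starlike functions:
`f` is normalized analytic on `𝔻`, nonvanishing off `0`, and
`zf'(z)/f(z) ≺ 1 + z e^z`. -/
def IsCardioidStarlike (g : ℂ → ℂ) : Prop :=
  AnalyticOn ℂ g (ball (0 : ℂ) 1) ∧ g 0 = 0 ∧ deriv g 0 = 1 ∧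
    (∀ z ∈ ball (0 : ℂ) 1, z ≠ 0 → g z ≠ 0) ∧
    ∃ ω : ℂ → ℂ, AnalyticOn ℂ ω (ball (0 : ℂ) 1) ∧ ω 0 = 0 ∧
      (∀ z ∈ ball (0 : ℂ) 1, ‖ω z‖ < 1) ∧
      ∀ z ∈ ball (0 : ℂ) 1, z ≠ 0 →
        z * deriv g z / g z = 1 + ω z * Complex.exp (ω z)

/-- `L` is the (unique) analytic logarithm of `g(z)/z` on `𝔻` with `L 0 = 0`. -/
def IsLogOfQuotient (g L : ℂ → ℂ) : Prop :=
  AnalyticOn ℂ L (ball (0 : ℂ) 1) ∧ L 0 = 0 ∧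
    ∀ z ∈ ball (0 : ℂ) 1, z ≠ 0 → Complex.exp (L z) = g z / z

open Set Filter Topology

lemma norm_one_sub_mul_exp_lt_norm {d : ℂ} {k : ℝ} (hd : d.re < 0) (hk : 1 ≤ k)
    (hkd : k * Real.exp d.re ≤ 1) : ‖1 - k * exp d‖ < ‖d‖ := by
  set a := Real.exp d.re
  have ha : 0 < a := Real.exp_pos _
  have ha1 : a < 1 := Real.exp_lt_one_iff.mpr hd
  have hxa : d.re + 1 < a := Real.add_one_lt_exp hd.ne
  have hcos : 1 - d.im ^ 2 / 2 ≤ Real.cos d.im := Real.one_sub_sq_div_two_le_cos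
  have hsq : ‖1 - k * exp d‖ ^ 2 = 1 - 2 * (k * a) * Real.cos d.im + (k * a) ^ 2 := by
    rw [← normSq_eq_norm_sq, normSq_apply]
    simp only [sub_re, sub_im, one_re, one_im, mul_re, mul_im, ofReal_re, ofReal_im, exp_re,
      exp_im]
    linear_combination (k * a) ^ 2 * Real.sin_sq_add_cos_sq d.im
  have hd2 : ‖d‖ ^ 2 = d.re ^ 2 + d.im ^ 2 := by
    rw [← normSq_eq_norm_sq, normSq_apply]; ring
  -- with `d = x + iy`: `|1 - k e^d|² = (1 - ka)² + 2ka(1 - cos y) ≤ (1 - a)² + y² < x² + y²`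
  refine pow_lt_pow_iff_left₀ (norm_nonneg _) (norm_nonneg _) two_ne_zero |>.mp ?_
  rw [hsq, hd2]
  nlinarith [mul_le_mul_of_nonneg_left hcos (by positivity : (0 : ℝ) ≤ 2 * (k * a)),
    mul_le_mul_of_nonneg_right hkd (sq_nonneg d.im),
    mul_self_le_mul_self (by linarith : (0 : ℝ) ≤ 1 - k * a) (by nlinarith : 1 - k * a ≤ 1 - a),
    mul_self_lt_mul_self (by linarith : (0 : ℝ) ≤ 1 - a) (by linarith : 1 - a < -d.re)]

lemma mul_exp_ne_mul_mul_exp {u v : ℂ} {k : ℝ} (hu : ‖u‖ < 1) (hv : ‖v‖ = 1) (hk : 1 ≤ k) :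
    u * exp u ≠ k * (v * exp v) := by
  intro h
  set d := v - u
  have hu_eq : u = k * v * exp d := by
    rw [exp_sub, mul_div_assoc', eq_div_iff (exp_ne_zero u)]
    linear_combination h
  have hkd : k * Real.exp d.re < 1 := by
    simpa [hu_eq, norm_exp, hv, abs_of_pos (by linarith : (0:ℝ) < k)] using hu
  have hd : d.re < 0 := by
    by_contra! h0
    nlinarith [Real.one_le_exp_iff.mpr h0]
  have hdv : d = v * (1 - k * exp d) := by linear_combination -hu_eq
  have : ‖d‖ = ‖1 - k * exp d‖ := by
    conv_lhs => rw [hdv]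
    rw [norm_mul, hv, one_mul]
  exact (norm_one_sub_mul_exp_lt_norm hd hk hkd.le).ne' this

lemma im_eq_zero_of_hasDerivAt_of_re_le_on_circle {w : ℂ → ℂ} {c : ℂ} (hw : HasDerivAt w c 1)
    (hle : ∀ t : ℝ, (w (exp (t * I))).re ≤ (w 1).re) : c.im = 0 := by
  have hcirc : HasDerivAt (fun z : ℂ => exp (z * I)) I ((0 : ℝ) : ℂ) := by
    simpa using ((hasDerivAt_id (0 : ℂ)).mul_const I).cexp
  have hwc : HasDerivAt w c (exp (((0 : ℝ) : ℂ) * I)) := by simpa using hw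
  have hφ := (hwc.comp ((0 : ℝ) : ℂ) hcirc).real_of_complex
  have hmax : IsLocalMax (fun t : ℝ => (w (exp (t * I))).re) 0 :=
    Eventually.of_forall fun t => by simpa using hle t
  simpa using hmax.hasDerivAt_eq_zero hφ

lemma one_le_re_of_hasDerivAt_of_re_le {w : ℂ → ℂ} {c : ℂ} (hw : HasDerivAt w c 1)
    (hw1 : w 1 = 1) (hle : ∀ t : ℝ, 0 < t → t < 1 → (w t).re ≤ t) : 1 ≤ c.re := by
  have hφ : HasDerivAt (fun t : ℝ => (w t).re) c.re 1 :=
    HasDerivAt.real_of_complex (by simpa using hw)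
  refine ge_of_tendsto hφ.tendsto_slope_zero_left ?_
  filter_upwards [Ioo_mem_nhdsLT (show (-1 : ℝ) < 0 by norm_num)] with h ⟨hh1, hh0⟩
  have := hle (1 + h) (by linarith) (by linarith)
  rw [smul_eq_mul, inv_mul_eq_div, one_le_div_of_neg hh0]
  push_cast at this ⊢
  rw [hw1, one_re]
  linarith

-- Jack's lemma.
theorem exists_one_le_and_mul_deriv_eq_of_isMaxOn_norm {H : ℂ → ℂ} {z₁ : ℂ}
    (hH : ∀ z ∈ closedBall (0 : ℂ) ‖z₁‖, DifferentiableAt ℂ H z) (hH0 : H 0 = 0)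
    (hHz₁ : H z₁ ≠ 0) (hmax : IsMaxOn (norm ∘ H) (closedBall 0 ‖z₁‖) z₁) :
    ∃ k : ℝ, 1 ≤ k ∧ z₁ * deriv H z₁ = k * H z₁ := by
  have hmem : ∀ ζ : ℂ, ‖ζ‖ ≤ 1 → ζ * z₁ ∈ closedBall (0 : ℂ) ‖z₁‖ := fun ζ hζ => by
    simpa [norm_mul] using mul_le_of_le_one_left (norm_nonneg z₁) hζ
  set w : ℂ → ℂ := fun ζ => H (ζ * z₁) / H z₁
  have hwd : ∀ ζ : ℂ, ‖ζ‖ ≤ 1 → HasDerivAt w (deriv H (ζ * z₁) * z₁ / H z₁) ζ := fun ζ hζ =>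
    (((hH _ (hmem ζ hζ)).hasDerivAt).comp ζ ((hasDerivAt_id ζ).mul_const z₁)).div_const _
      |>.congr_deriv (by simp)
  have hwle : ∀ ζ : ℂ, ‖ζ‖ ≤ 1 → ‖w ζ‖ ≤ 1 := fun ζ hζ => by
    rw [norm_div, div_le_one (norm_pos_iff.mpr hHz₁)]
    exact hmax (hmem ζ hζ)
  have hw1 : w 1 = 1 := by simp [w, hHz₁]
  have hschwarz : ∀ ζ : ℂ, ‖ζ‖ < 1 → ‖w ζ‖ ≤ ‖ζ‖ := fun ζ hζ =>
    norm_le_norm_of_mapsTo_ball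
      (fun x hx => (hwd x (mem_ball_zero_iff.mp hx).le).differentiableAt.differentiableWithinAt)
      (fun x hx => mem_closedBall_zero_iff.mpr (hwle x (mem_ball_zero_iff.mp hx).le))
      (by simp [w, hH0]) hζ
  have hderiv : HasDerivAt w (z₁ * deriv H z₁ / H z₁) 1 := by
    simpa [mul_comm] using hwd 1 (by simp)
  set c := z₁ * deriv H z₁ / H z₁
  have him : c.im = 0 := im_eq_zero_of_hasDerivAt_of_re_le_on_circle hderiv fun t => by
    rw [hw1, one_re]
    exact (re_le_norm _).trans (hwle _ (by simp [norm_exp]))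
  have hre : 1 ≤ c.re := one_le_re_of_hasDerivAt_of_re_le hderiv hw1 fun t ht0 ht1 =>
    (re_le_norm _).trans <|
      (hschwarz _ (by simpa [abs_of_pos ht0])).trans_eq (by simp [abs_of_pos ht0])
  refine ⟨c.re, hre, ?_⟩
  rw [show ((c.re : ℝ) : ℂ) = c from Complex.ext rfl (by simp [him]), div_mul_cancel₀ _ hHz₁]

lemma exists_norm_minimal_mem_preimage {g : ℂ → ℂ} {R : ℝ} {C : Set ℂ}
    (hg : ContinuousOn g (ball 0 R)) (hC : IsClosed C) {z : ℂ} (hz : z ∈ ball (0 : ℂ) R)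
    (hgz : g z ∈ C) : ∃ z₁ ∈ ball (0 : ℂ) R, g z₁ ∈ C ∧ MapsTo g (ball 0 ‖z₁‖) Cᶜ := by
  have hsub : closedBall (0 : ℂ) ‖z‖ ⊆ ball 0 R :=
    closedBall_subset_ball (mem_ball_zero_iff.mp hz)
  have hS : IsCompact (closedBall (0 : ℂ) ‖z‖ ∩ g ⁻¹' C) :=
    (isCompact_closedBall 0 ‖z‖).of_isClosed_subset
      ((hg.mono hsub).preimage_isClosed_of_isClosed isClosed_closedBall hC) inter_subset_left
  obtain ⟨z₁, ⟨hz₁b, hz₁C⟩, hmin⟩ :=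
    hS.exists_isMinOn ⟨z, by simp, hgz⟩ continuous_norm.continuousOn
  refine ⟨z₁, hsub hz₁b, hz₁C, fun x hx hxC => ?_⟩
  have hx' : ‖x‖ < ‖z₁‖ := mem_ball_zero_iff.mp hx
  have hxz : ‖x‖ ≤ ‖z‖ := hx'.le.trans (mem_closedBall_zero_iff.mp hz₁b)
  exact hx'.not_ge (hmin ⟨mem_closedBall_zero_iff.mpr hxz, hxC⟩)

lemma Set.MapsTo.closedBall_of_continuousOn {E F : Type*} [NormedAddCommGroup E]
    [NormedSpace ℝ E] [TopologicalSpace F] {g : E → F} {c : E} {r : ℝ} {C : Set F}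
    (h : MapsTo g (ball c r) C) (hr : r ≠ 0) (hg : ContinuousOn g (closedBall c r))
    (hC : IsClosed C) : MapsTo g (closedBall c r) C := by
  simpa [closure_ball c hr, hC.closure_eq] using
    h.closure_of_continuousOn (by rwa [closure_ball c hr])

theorem mapsTo_ball_of_mul_deriv_mul_exp_eq {H ω : ℂ → ℂ} {R : ℝ}
    (hH : DifferentiableOn ℂ H (ball 0 R)) (hH0 : H 0 = 0)
    (hω : ∀ z ∈ ball (0 : ℂ) R, ‖ω z‖ < 1)
    (heq : ∀ z ∈ ball (0 : ℂ) R, z ≠ 0 → z * deriv H z * exp (H z) = ω z * exp (ω z)) :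
    MapsTo H (ball 0 R) (ball 0 1) := by
  intro z hz
  by_contra hHz
  obtain ⟨z₁, hz₁, hHz₁, hlt⟩ :=
    exists_norm_minimal_mem_preimage hH.continuousOn isOpen_ball.isClosed_compl hz hHz
  rw [compl_compl] at hlt
  have hz₁0 : z₁ ≠ 0 := by rintro rfl; simp [hH0] at hHz₁
  have hsub : closedBall (0 : ℂ) ‖z₁‖ ⊆ ball 0 R :=
    closedBall_subset_ball (mem_ball_zero_iff.mp hz₁)
  have hle : MapsTo H (closedBall 0 ‖z₁‖) (closedBall 0 1) :=
    (hlt.mono_right ball_subset_closedBall).closedBall_of_continuousOn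
      (norm_ne_zero_iff.mpr hz₁0) (hH.continuousOn.mono hsub) isClosed_closedBall
  have hnorm : ‖H z₁‖ = 1 :=
    le_antisymm (by simpa using hle (mem_closedBall_zero_iff.mpr le_rfl))
      (by simpa using hHz₁)
  obtain ⟨k, hk, hkeq⟩ := exists_one_le_and_mul_deriv_eq_of_isMaxOn_norm
    (fun x hx => hH.differentiableAt (isOpen_ball.mem_nhds (hsub hx))) hH0
    (norm_ne_zero_iff.mp (by simp [hnorm])) (fun x hx => by simpa [hnorm] using hle hx)
  exact mul_exp_ne_mul_mul_exp (hω z₁ hz₁) hnorm hk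
    (by linear_combination exp (H z₁) * hkeq - heq z₁ hz₁ hz₁0)

theorem exists_hasDerivAt_exp_eq_of_ne_zero {F : ℂ → ℂ} {r : ℝ}
    (hF : DifferentiableOn ℂ F (ball 0 r)) (hF0 : F 0 = 1)
    (hne : ∀ z ∈ ball (0 : ℂ) r, F z ≠ 0) :
    ∃ H : ℂ → ℂ, H 0 = 0 ∧ (∀ z ∈ ball (0 : ℂ) r, HasDerivAt H (deriv F z / F z) z) ∧
      ∀ z ∈ ball (0 : ℂ) r, exp (H z) = F z := by
  obtain ⟨H, hH0, hH⟩ :=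
    (((hF.deriv isOpen_ball).div hF hne).isExactOn_ball).with_val_at 0 0
  refine ⟨H, hH0, hH, fun z hz => ?_⟩
  have hG : ∀ x ∈ ball (0 : ℂ) r, HasDerivAt (fun y => F y * exp (-H y)) 0 x := fun x hx =>
    ((hF.differentiableAt (isOpen_ball.mem_nhds hx)).hasDerivAt.mul (hH x hx).neg.cexp).congr_deriv
      (by simp only [Pi.div_apply, Pi.neg_apply]; field_simp [hne x hx]; ring)
  have hconst := isOpen_ball.is_const_of_deriv_eq_zero (convex_ball 0 r).isPreconnected
    (fun x hx => (hG x hx).differentiableAt.differentiableWithinAt) (fun x hx => (hG x hx).deriv)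
    hz (mem_ball_self (pos_of_mem_ball hz))
  rw [hF0, hH0, neg_zero, exp_zero, mul_one, exp_neg, mul_inv_eq_one₀ (exp_ne_zero _)] at hconst
  exact hconst.symm

theorem exists_exp_eq_one_add_of_ne_zero {L ω : ℂ → ℂ} {r : ℝ}
    (hL : DifferentiableOn ℂ L (ball 0 r)) (hL0 : L 0 = 0) (hω : ∀ z ∈ ball (0 : ℂ) r, ‖ω z‖ < 1)
    (heq : ∀ z ∈ ball (0 : ℂ) r, z ≠ 0 → z * deriv L z = ω z * exp (ω z))
    (hne : ∀ z ∈ ball (0 : ℂ) r, 1 + L z ≠ 0) :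
    ∃ H : ℂ → ℂ, DifferentiableOn ℂ H (ball 0 r) ∧ H 0 = 0 ∧
      MapsTo H (ball 0 r) (ball 0 1) ∧ ∀ z ∈ ball (0 : ℂ) r, exp (H z) = 1 + L z := by
  obtain ⟨H, hH0, hH, hHexp⟩ :=
    exists_hasDerivAt_exp_eq_of_ne_zero (hL.const_add 1) (by simp [hL0]) hne
  have hHd : DifferentiableOn ℂ H (ball 0 r) := fun z hz =>
    (hH z hz).differentiableAt.differentiableWithinAt
  refine ⟨H, hHd, hH0, mapsTo_ball_of_mul_deriv_mul_exp_eq hHd hH0 hω fun z hz hz0 => ?_, hHexp⟩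
  rw [(hH z hz).deriv, hHexp z hz, deriv_const_add, ← heq z hz hz0]
  field_simp [hne z hz]

theorem exists_exp_eq_one_add_of_mul_deriv_eq {L ω : ℂ → ℂ}
    (hL : DifferentiableOn ℂ L (ball 0 1)) (hL0 : L 0 = 0) (hω : ∀ z ∈ ball (0 : ℂ) 1, ‖ω z‖ < 1)
    (heq : ∀ z ∈ ball (0 : ℂ) 1, z ≠ 0 → z * deriv L z = ω z * exp (ω z)) :
    ∃ H : ℂ → ℂ, DifferentiableOn ℂ H (ball 0 1) ∧ H 0 = 0 ∧
      MapsTo H (ball 0 1) (ball 0 1) ∧ ∀ z ∈ ball (0 : ℂ) 1, exp (H z) = 1 + L z := by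
  refine exists_exp_eq_one_add_of_ne_zero hL hL0 hω heq fun z hz hz0 => ?_
  obtain ⟨z₁, hz₁, hLz₁, hne⟩ := exists_norm_minimal_mem_preimage (C := {0})
    (hL.const_add 1).continuousOn isClosed_singleton hz hz0
  have hz₁0 : z₁ ≠ 0 := by rintro rfl; simp [hL0] at hLz₁
  have hsub : ball (0 : ℂ) ‖z₁‖ ⊆ ball 0 1 := ball_subset_ball (mem_ball_zero_iff.mp hz₁).le
  obtain ⟨H, -, -, hH, hHexp⟩ := exists_exp_eq_one_add_of_ne_zero (hL.mono hsub) hL0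
    (fun z hz => hω z (hsub hz)) (fun z hz => heq z (hsub hz)) fun z hz => by simpa using hne hz
  -- `‖1 + L‖ = exp (Re H) > exp (-1)` inside the smaller disc, hence also on its boundary
  have hbound : MapsTo (fun z => 1 + L z) (ball 0 ‖z₁‖) {w | Real.exp (-1) ≤ ‖w‖} :=
    fun z hz => by
      show Real.exp (-1) ≤ ‖1 + L z‖
      rw [← hHexp z hz, norm_exp, Real.exp_le_exp]
      linarith [neg_abs_le (H z).re, abs_re_le_norm (H z), mem_ball_zero_iff.mp (hH hz)]
  have h₁ : Real.exp (-1) ≤ ‖1 + L z₁‖ :=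
    hbound.closedBall_of_continuousOn (norm_ne_zero_iff.mpr hz₁0)
      ((hL.const_add 1).continuousOn.mono (closedBall_subset_ball (mem_ball_zero_iff.mp hz₁)))
      (isClosed_le continuous_const continuous_norm) (mem_closedBall_zero_iff.mpr le_rfl)
  rw [mem_singleton_iff.mp hLz₁, norm_zero] at h₁
  exact (Real.exp_pos _).not_ge h₁

lemma mul_deriv_eq_of_exp_eq_div {f L : ℂ → ℂ} {z : ℂ} (hf : DifferentiableAt ℂ f z)
    (hL : DifferentiableAt ℂ L z) (hz : z ≠ 0) (hfz : f z ≠ 0)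
    (hexp : ∀ᶠ w in 𝓝 z, exp (L w) = f w / w) :
    z * deriv L z = z * deriv f z / f z - 1 := by
  have hLz : exp (L z) = f z / z := hexp.self_of_nhds
  have h := hL.hasDerivAt.cexp.unique
    ((hf.hasDerivAt.div (hasDerivAt_id z) hz).congr_of_eventuallyEq hexp)
  rw [hLz, id_eq] at h
  field_simp at h ⊢
  linear_combination h

lemma isCardioidStarlike_mul_exp_exp_sub_one {c : ℂ} (hc : ‖c‖ ≤ 1) :
    IsCardioidStarlike (fun z => z * exp (exp (c * z) - 1)) := by
  have hd : ∀ z : ℂ, HasDerivAt (fun z => z * exp (exp (c * z) - 1))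
      (exp (exp (c * z) - 1) * (1 + c * z * exp (c * z))) z := fun z =>
    ((hasDerivAt_id z).mul ((((hasDerivAt_id z).const_mul c).cexp.sub_const 1).cexp)).congr_deriv
      (by simp only [id_eq]; ring)
  refine ⟨DifferentiableOn.analyticOn (fun z _ => (hd z).differentiableAt.differentiableWithinAt)
    isOpen_ball, by simp, by simp [(hd 0).deriv], fun z _ hz => mul_ne_zero hz (exp_ne_zero _),
    fun z => c * z, (differentiable_id.const_mul c).differentiableOn.analyticOn isOpen_ball,
    by simp, fun z hz => ?_, fun z _ hz => ?_⟩
  · rw [norm_mul]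
    exact mul_lt_one_of_nonneg_of_lt_one_right hc (norm_nonneg _) (mem_ball_zero_iff.mp hz)
  · rw [(hd z).deriv]
    field_simp [exp_ne_zero]

lemma isLogOfQuotient_mul_exp_exp_sub_one (c : ℂ) :
    IsLogOfQuotient (fun z => z * exp (exp (c * z) - 1)) (fun z => exp (c * z) - 1) :=
  ⟨(by fun_prop : Differentiable ℂ fun z => exp (c * z) - 1).differentiableOn.analyticOn
    isOpen_ball, by simp, fun z _ hz => by rw [eq_div_iff hz, mul_comm]⟩

theorem Differentiable.not_isLocalMax_re {Φ : ℂ → ℂ} (hΦ : Differentiable ℂ Φ)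
    (hnc : ∃ u v, Φ u ≠ Φ v) (p : ℂ) : ¬IsLocalMax (fun w => (Φ w).re) p := by
  intro hmax
  rcases AnalyticOnNhd.is_constant_or_isOpenMap (fun z _ => hΦ.analyticAt z) with
    ⟨w, hw⟩ | hopen
  · obtain ⟨u, v, huv⟩ := hnc
    exact huv ((hw u).trans (hw v).symm)
  obtain ⟨ε, hε, hball⟩ := Metric.mem_nhds_iff.mp (hopen.image_mem_nhds hmax)
  obtain ⟨y, hy, hyp⟩ := hball (show Φ p + (ε / 2 : ℝ) ∈ ball (Φ p) ε by
    simp [abs_of_pos hε, hε])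
  have : (Φ y).re ≤ (Φ p).re := hy
  rw [hyp, add_re, ofReal_re] at this
  linarith

lemma isLocalMax_re_exp_sub_one {Φ : ℂ → ℂ} {z₀ u₀ : ℂ} (hz₀ : z₀ ≠ 0) (hu₀ : ‖u₀‖ < ‖z₀‖)
    (hmax : ∀ g Lg : ℂ → ℂ, IsCardioidStarlike g → IsLogOfQuotient g Lg →
      (Φ (Lg z₀)).re ≤ (Φ (exp u₀ - 1)).re) :
    IsLocalMax (fun w => (Φ w).re) (exp u₀ - 1) := by
  have hopen : IsOpen ((fun u => exp u - 1) '' ball 0 ‖z₀‖) :=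
    ((isOpenMap_sub_right 1).comp isOpenMap_exp) _ isOpen_ball
  refine eventually_of_mem (hopen.mem_nhds ⟨u₀, mem_ball_zero_iff.mpr hu₀, rfl⟩) ?_
  rintro _ ⟨u, hu, rfl⟩
  have hc : ‖u / z₀‖ ≤ 1 := by
    rw [norm_div, div_le_one (norm_pos_iff.mpr hz₀)]
    exact (mem_ball_zero_iff.mp hu).le
  simpa [div_mul_cancel₀ u hz₀] using
    hmax _ _ (isCardioidStarlike_mul_exp_exp_sub_one hc) (isLogOfQuotient_mul_exp_exp_sub_one _)

theorem IsLogOfQuotient.exists_eq_exp_sub_one {f L : ℂ → ℂ} (hL : IsLogOfQuotient f L)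
    (hf : IsCardioidStarlike f) :
    ∃ H : ℂ → ℂ, DifferentiableOn ℂ H (ball 0 1) ∧ H 0 = 0 ∧
      MapsTo H (ball 0 1) (ball 0 1) ∧ ∀ z ∈ ball (0 : ℂ) 1, L z = exp (H z) - 1 := by
  obtain ⟨hfa, -, -, hfne, ω, -, -, hω, hωeq⟩ := hf
  obtain ⟨hLa, hL0, hLexp⟩ := hL
  have hkey : ∀ z ∈ ball (0 : ℂ) 1, z ≠ 0 → z * deriv L z = ω z * exp (ω z) :=
    fun z hz hz0 => by
      have hU : ball (0 : ℂ) 1 ∩ {0}ᶜ ∈ 𝓝 z :=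
        (isOpen_ball.inter isOpen_compl_singleton).mem_nhds ⟨hz, hz0⟩
      rw [mul_deriv_eq_of_exp_eq_div (hfa.differentiableOn.differentiableAt
        (isOpen_ball.mem_nhds hz)) (hLa.differentiableOn.differentiableAt
        (isOpen_ball.mem_nhds hz)) hz0 (hfne z hz hz0)
        (eventually_of_mem hU fun w hw => hLexp w hw.1 hw.2), hωeq z hz hz0, add_sub_cancel_left]
  obtain ⟨H, hHd, hH0, hHmaps, hHexp⟩ :=
    exists_exp_eq_one_add_of_mul_deriv_eq hLa.differentiableOn hL0 hω hkey
  exact ⟨H, hHd, hH0, hHmaps, fun z hz => by rw [hHexp z hz, add_sub_cancel_left]⟩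

lemma exists_norm_eq_one_and_eq_mul_of_norm_eq {H : ℂ → ℂ} {z₀ : ℂ}
    (hH : DifferentiableOn ℂ H (ball 0 1)) (hH0 : H 0 = 0)
    (hmaps : MapsTo H (ball 0 1) (closedBall 0 1)) (hz₀ : z₀ ∈ ball (0 : ℂ) 1) (hz₀0 : z₀ ≠ 0)
    (heq : ‖H z₀‖ = ‖z₀‖) : ∃ ζ : ℂ, ‖ζ‖ = 1 ∧ ∀ z ∈ ball (0 : ℂ) 1, H z = ζ * z := by
  obtain ⟨ζ, hζ, hHζ⟩ := affine_of_mapsTo_ball_of_exists_norm_dslope_eq_div' (R₂ := 1) hH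
    (by rwa [hH0]) ⟨z₀, hz₀, by
      rw [dslope_of_ne _ hz₀0, slope_def_field, hH0, sub_zero, sub_zero, norm_div, heq,
        div_self (norm_ne_zero_iff.mpr hz₀0), div_one]⟩
  exact ⟨ζ, by simpa using hζ, fun z hz => by simpa [hH0, mul_comm] using hHζ hz⟩

/-- any extremal function for `Re Φ(log(f(z₀)/z₀))` over `𝒮*_℘`
is of the form `z·exp(e^{ζz} − 1)` with `|ζ| = 1`. -/
theorem stmt_8 (Φ : ℂ → ℂ) (hΦ : Differentiable ℂ Φ) (hΦnc : ∃ u v : ℂ, Φ u ≠ Φ v)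
    (z₀ : ℂ) (hz₀0 : 0 < ‖z₀‖) (hz₀1 : ‖z₀‖ < 1)
    (f Lf : ℂ → ℂ) (hf : IsCardioidStarlike f) (hLf : IsLogOfQuotient f Lf)
    (hmax : ∀ g Lg : ℂ → ℂ, IsCardioidStarlike g → IsLogOfQuotient g Lg →
      (Φ (Lg z₀)).re ≤ (Φ (Lf z₀)).re) :
    ∃ ζ : ℂ, ‖ζ‖ = 1 ∧
      ∀ z ∈ ball (0 : ℂ) 1, f z = z * Complex.exp (Complex.exp (ζ * z) - 1) := by
  obtain ⟨H, hHd, hH0, hHmaps, hLH⟩ := hLf.exists_eq_exp_sub_one hf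
  have hz₀ : z₀ ∈ ball (0 : ℂ) 1 := mem_ball_zero_iff.mpr hz₀1
  have hHmaps' := hHmaps.mono_right ball_subset_closedBall
  rcases (norm_le_norm_of_mapsTo_ball hHd hHmaps' hH0 hz₀1).lt_or_eq with hlt | heq
  · rw [hLH z₀ hz₀] at hmax
    exact absurd (isLocalMax_re_exp_sub_one (norm_pos_iff.mp hz₀0) hlt hmax)
      (hΦ.not_isLocalMax_re hΦnc _)
  obtain ⟨ζ, hζ, hHζ⟩ :=
    exists_norm_eq_one_and_eq_mul_of_norm_eq hHd hH0 hHmaps' hz₀ (norm_pos_iff.mp hz₀0) heq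
  refine ⟨ζ, hζ, fun z hz => ?_⟩
  rcases eq_or_ne z 0 with rfl | hz0
  · simp [hf.2.1]
  rw [← mul_div_cancel₀ (f z) hz0, ← hLf.2.2 z hz hz0, hLH z hz, hHζ z hz]
end

section
/- Let a be a real number with 1 − 1/e < a < 1 + e, and set R_a = (a − 1) + 1/e if a ≤ 1 + (e − e^{−1})/2 and R_a = e − (a − 1) if a ≥ 1 + (e − e^{−1})/2. Let (a_k)_{k≥1} be a sequence of complex numbers satisfying |1 − a| + Σ_{k≥1} (R_a + |1 − a − k|)·|a_k| ≤ R_a. Then the series Σ_{k≥1} a_k z^k converges on 𝔻, the denominator 1 + Σ_{k≥1} a_k z^k is nonzero on 𝔻, and the function f(z) = z/(1 + Σ_{k≥1} a_k z^k) satisfies: for every z ∈ 𝔻 \ {0} there exists w ∈ ℂ with |w| < 1 such that zf'(z)/f(z) = 1 + w·e^w; that is, f ∈ 𝒮*_℘. -/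
/-!
Write `h w = w * exp w`, so that `℘(𝔻) = 1 + h(𝔻)`. For `‖w‖ = 1` the real inequality
`sinh 1 * Re (w * exp (i Im w)) ≤ sinh (Re w)` gives `‖h w - sinh 1‖ ≥ cosh 1`: the image of
the unit circle misses the disc with diameter `[h (-1), h 1] = [-1/e, e]`. As `h(𝔻)` is open
(open mapping) and contains `0`, connectedness puts the whole disc inside `h(𝔻)`; and
`R_a = cosh 1 - |a - 1 - sinh 1|` is exactly the radius for which the disc about `a - 1` fits
into it.

For `f = z / G` with `G = 1 + ∑ a_k z^k` one has `z f'/f = (G - z G')/G`, and the coefficient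
condition bounds `‖(1 - a) G - z G'‖` by `R_a ‖G‖`, strictly since `‖z‖ < 1`.
-/

open Complex Metric

lemma Real.exp_mul_le_one_add_mul {t : ℝ} (ht₀ : 0 ≤ t) (ht₁ : t ≤ 1) (x : ℝ) :
    Real.exp (t * x) ≤ 1 + t * (Real.exp x - 1) := by
  have := convexOn_exp.2 (Set.mem_univ 0) (Set.mem_univ x) (sub_nonneg.2 ht₁) ht₀ (by ring)
  simp only [smul_eq_mul, mul_zero, zero_add, Real.exp_zero, mul_one] at this
  linarith

lemma Real.exp_mul_add_one_sub_le (a x : ℝ) : Real.exp a * (x - a + 1) ≤ Real.exp x := by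
  calc Real.exp a * (x - a + 1) ≤ Real.exp a * Real.exp (x - a) := by
        gcongr; exact Real.add_one_le_exp _
    _ = Real.exp x := by rw [← Real.exp_add, add_sub_cancel]

lemma five_div_six_mul_sq_le_mul_sin {s : ℝ} (hs : |s| ≤ 1) :
    5 / 6 * s ^ 2 ≤ s * Real.sin s := by
  wlog h₀ : 0 ≤ s generalizing s
  · simpa [Real.sin_neg] using this (s := -s) (by rwa [abs_neg]) (by linarith)
  rcases h₀.eq_or_lt with rfl | hpos
  · simp
  have hs₁ : s ≤ 1 := (le_abs_self s).trans hs
  have := mul_le_mul_of_nonneg_left (Real.sin_gt_sub_cube hpos).le h₀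
  nlinarith [pow_le_one₀ h₀ hs₁ (n := 2)]

lemma sinh_one_mul_le_sinh {c s : ℝ} (h : c ^ 2 + s ^ 2 = 1) :
    Real.sinh 1 * (c * Real.cos s - s * Real.sin s) ≤ Real.sinh c := by
  have hs : |s| ≤ 1 := sq_le_one_iff_abs_le_one s |>.1 (by nlinarith)
  have hc₁ : c ≤ 1 := by nlinarith
  have hc₀ : -1 ≤ c := by nlinarith
  have hsin := five_div_six_mul_sq_le_mul_sin hs
  have hEF : Real.exp 1 * Real.exp (-1) = 1 := by rw [← Real.exp_add]; norm_num
  have hE := Real.exp_one_gt_d9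
  have hE' := Real.exp_one_lt_d9
  have hF := Real.exp_pos (-1)
  have hEF₀ : 0 ≤ Real.exp 1 - Real.exp (-1) := by nlinarith
  rw [Real.sinh_eq, Real.sinh_eq]
  -- `exp` is bounded below by its tangent at `±1` and above by its chord over `[0, ±1]`;
  -- both bounds are sharp at `c = ±1`, where the inequality is an equality.
  rcases le_total 0 c with hc | hc
  · have htan := Real.exp_mul_add_one_sub_le 1 c
    have hchord := Real.exp_mul_le_one_add_mul hc hc₁ (-1)
    rw [mul_neg_one] at hchord
    have hK : c * Real.cos s - s * Real.sin s ≤ c - 5 / 6 * (1 - c ^ 2) := by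
      nlinarith [mul_le_of_le_one_right hc (Real.cos_le_one s)]
    have hkey : 0 ≤ (1 - c) * (5 / 6 * (Real.exp 1 - Real.exp (-1)) * (1 + c) - 1) :=
      mul_nonneg (by linarith) (by nlinarith)
    nlinarith [mul_le_mul_of_nonneg_left hK hEF₀]
  · have htan := Real.exp_mul_add_one_sub_le (-1) c
    have hchord := Real.exp_mul_le_one_add_mul (neg_nonneg.2 hc) (by linarith) 1
    rw [mul_one] at hchord
    have hK : c * Real.cos s - s * Real.sin s ≤ c - (1 - c ^ 2) / 3 := by
      nlinarith [mul_le_mul_of_nonpos_left (Real.one_sub_sq_div_two_le_cos (x := s)) hc]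
    have hkey : 0 ≤ (1 + c) *
        ((Real.exp 1 - Real.exp (-1)) * (1 - c) / 3 - (1 - 2 * Real.exp (-1))) :=
      mul_nonneg (by linarith) (by nlinarith [mul_nonneg hEF₀ (neg_nonneg.2 hc)])
    nlinarith [mul_le_mul_of_nonneg_left hK hEF₀]

lemma cosh_one_le_norm_mul_exp_sub_sinh_one {w : ℂ} (hw : ‖w‖ = 1) :
    Real.cosh 1 ≤ ‖w * exp w - Real.sinh 1‖ := by
  have hcs : w.re ^ 2 + w.im ^ 2 = 1 := by
    rw [sq, sq, ← Complex.normSq_apply, ← Complex.sq_norm, hw, one_pow]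
  set X := Real.exp w.re
  have hnorm : ‖w * exp w‖ = X := by rw [norm_mul, hw, Complex.norm_exp, one_mul]
  have hre : (w * exp w).re = X * (w.re * Real.cos w.im - w.im * Real.sin w.im) := by
    simp only [Complex.mul_re, Complex.exp_re, Complex.exp_im]; ring
  have hsinh : 2 * X * Real.sinh w.re = X ^ 2 - 1 := by
    rw [Real.sinh_eq, Real.exp_neg]; field_simp; ring
  have hsq : ‖w * exp w - Real.sinh 1‖ ^ 2
      = ‖w * exp w‖ ^ 2 - 2 * Real.sinh 1 * (w * exp w).re + Real.sinh 1 ^ 2 := by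
    rw [Complex.sq_norm, Complex.sq_norm, Complex.normSq_apply, Complex.normSq_apply]
    simp only [Complex.sub_re, Complex.sub_im, Complex.ofReal_re, Complex.ofReal_im]; ring
  have hkey := mul_le_mul_of_nonneg_left (sinh_one_mul_le_sinh hcs) (Real.exp_pos w.re).le
  refine (pow_le_pow_iff_left₀ (Real.cosh_pos 1).le (norm_nonneg _) two_ne_zero).1 ?_
  rw [hsq, hnorm, hre, Real.cosh_sq]
  nlinarith

theorem IsPreconnected.subset_image_ball {X Y : Type*} [PseudoMetricSpace X] [ProperSpace X]
    [TopologicalSpace Y] [T2Space Y] {f : X → Y} {x : X} {r : ℝ} {B : Set Y}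
    (hB : IsPreconnected B) (hf : ContinuousOn f (closedBall x r))
    (hopen : IsOpen (f '' ball x r)) (hne : (B ∩ f '' ball x r).Nonempty)
    (hsphere : Disjoint B (f '' sphere x r)) : B ⊆ f '' ball x r := by
  have hclosed : IsClosed (f '' closedBall x r) :=
    ((isCompact_closedBall x r).image_of_continuousOn hf).isClosed
  refine hB.subset_left_of_subset_union hopen hclosed.isOpen_compl
    (Set.disjoint_compl_right_iff_subset.2 (Set.image_mono ball_subset_closedBall)) ?_ hne
  intro y hy
  by_cases hy' : y ∈ f '' closedBall x r
  · rw [← ball_union_sphere, Set.image_union] at hy'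
    exact hy'.resolve_right (Set.disjoint_left.1 hsphere hy) |> Or.inl
  · exact Or.inr hy'

lemma isOpen_image_ball_mul_exp : IsOpen ((fun w : ℂ => w * exp w) '' ball 0 1) := by
  have hdiff : Differentiable ℂ (fun w : ℂ => w * exp w) := by fun_prop
  rcases (hdiff.differentiableOn.analyticOnNhd isOpen_ball).is_constant_or_isOpen
    (convex_ball (0 : ℂ) 1).isPreconnected with ⟨w₀, hw₀⟩ | hopen
  · have h₀ := hw₀ 0 (mem_ball_self one_pos)
    have h₁ := hw₀ (1 / 2) (by rw [mem_ball_zero_iff]; norm_num)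
    rw [zero_mul, ← h₁] at h₀
    exact absurd h₀.symm (mul_ne_zero (by norm_num) (exp_ne_zero _))
  · exact hopen _ subset_rfl isOpen_ball

lemma ball_sinh_one_subset_image_mul_exp :
    ball (Real.sinh 1 : ℂ) (Real.cosh 1) ⊆ (fun w : ℂ => w * exp w) '' ball 0 1 := by
  refine (convex_ball _ _).isPreconnected.subset_image_ball (by fun_prop)
    isOpen_image_ball_mul_exp ⟨0, ?_, 0, mem_ball_self one_pos, by simp⟩ ?_
  · rw [mem_ball, dist_comm, dist_zero_right, Complex.norm_real, Real.norm_eq_abs,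
      abs_of_pos (Real.sinh_pos_iff.2 one_pos)]
    exact Real.sinh_lt_cosh 1
  · rw [Set.disjoint_right]
    rintro _ ⟨w, hw, rfl⟩ hmem
    rw [mem_sphere_zero_iff_norm] at hw
    rw [mem_ball, dist_eq_norm] at hmem
    exact (cosh_one_le_norm_mul_exp_sub_sinh_one hw).not_gt hmem

lemma radius_eq_cosh_sub_abs {a Ra : ℝ}
    (hRa : Ra = if a ≤ 1 + (Real.exp 1 - (Real.exp 1)⁻¹) / 2 then
      (a - 1) + (Real.exp 1)⁻¹ else Real.exp 1 - (a - 1)) :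
    Ra = Real.cosh 1 - |a - 1 - Real.sinh 1| := by
  have hE : Real.exp 1 = Real.cosh 1 + Real.sinh 1 := (Real.cosh_add_sinh 1).symm
  have hF : (Real.exp 1)⁻¹ = Real.cosh 1 - Real.sinh 1 := by
    rw [← Real.exp_neg, ← Real.cosh_sub_sinh]
  rw [hE, ← hE, hF] at hRa
  split_ifs at hRa with h
  · rw [abs_of_nonpos (by linarith)]; linarith
  · rw [abs_of_pos (by linarith)]; linarith

lemma abs_sub_one_sub_sinh_one_lt_cosh_one {a : ℝ} (ha₁ : 1 - 1 / Real.exp 1 < a)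
    (ha₂ : a < 1 + Real.exp 1) : |a - 1 - Real.sinh 1| < Real.cosh 1 := by
  have hE : Real.exp 1 = Real.cosh 1 + Real.sinh 1 := (Real.cosh_add_sinh 1).symm
  have hF : 1 / Real.exp 1 = Real.cosh 1 - Real.sinh 1 := by
    rw [one_div, ← Real.exp_neg, ← Real.cosh_sub_sinh]
  rw [abs_sub_lt_iff]
  constructor <;> linarith

lemma exists_eq_one_add_mul_exp {a : ℝ} {v : ℂ}
    (hv : ‖v - a‖ < Real.cosh 1 - |a - 1 - Real.sinh 1|) :
    ∃ w : ℂ, ‖w‖ < 1 ∧ v = 1 + w * exp w := by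
  have hdist : dist ((a : ℂ) - 1) (Real.sinh 1 : ℂ) = |a - 1 - Real.sinh 1| := by
    rw [dist_eq_norm, ← Complex.ofReal_one, ← Complex.ofReal_sub, ← Complex.ofReal_sub,
      Complex.norm_real, Real.norm_eq_abs]
  have hmem : v - 1 ∈ ball ((a : ℂ) - 1) (Real.cosh 1 - |a - 1 - Real.sinh 1|) := by
    rwa [mem_ball, dist_eq_norm, sub_sub_sub_cancel_right]
  obtain ⟨w, hw, hwv⟩ := ball_sinh_one_subset_image_mul_exp
    (ball_subset_ball' (by rw [hdist, sub_add_cancel]) hmem)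
  exact ⟨w, mem_ball_zero_iff.1 hw, by rw [← sub_eq_iff_eq_add', ← hwv]⟩


section PowerSeries

variable {b : ℕ → ℂ}

lemma norm_mul_pow_succ_le (k : ℕ) {z : ℂ} (hz : ‖z‖ ≤ 1) :
    ‖b k * z ^ (k + 1)‖ ≤ ‖z‖ * ‖b k‖ := by
  rw [norm_mul, norm_pow, pow_succ', mul_left_comm]
  exact mul_le_mul_of_nonneg_left
    (mul_le_of_le_one_right (norm_nonneg _) (pow_le_one₀ (norm_nonneg z) hz)) (norm_nonneg z)

lemma summable_norm_mul_pow_succ (hb : Summable fun k => ‖b k‖) {z : ℂ} (hz : ‖z‖ ≤ 1) :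
    Summable fun k => ‖b k * z ^ (k + 1)‖ :=
  (hb.mul_left ‖z‖).of_nonneg_of_le (fun _ => norm_nonneg _) fun k => norm_mul_pow_succ_le k hz

lemma norm_tsum_mul_pow_succ_le (hb : Summable fun k => ‖b k‖) {z : ℂ} (hz : ‖z‖ ≤ 1) :
    ‖∑' k, b k * z ^ (k + 1)‖ ≤ ‖z‖ * ∑' k, ‖b k‖ :=
  calc ‖∑' k, b k * z ^ (k + 1)‖ ≤ ∑' k, ‖b k * z ^ (k + 1)‖ :=
        norm_tsum_le_tsum_norm (summable_norm_mul_pow_succ hb hz)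
    _ ≤ ∑' k, ‖z‖ * ‖b k‖ :=
        (summable_norm_mul_pow_succ hb hz).tsum_le_tsum (fun k => norm_mul_pow_succ_le k hz)
          (hb.mul_left _)
    _ = ‖z‖ * ∑' k, ‖b k‖ := tsum_mul_left

lemma one_add_tsum_mul_pow_succ_ne_zero (hb : Summable fun k => ‖b k‖)
    (hb₁ : ∑' k, ‖b k‖ ≤ 1) {z : ℂ} (hz : ‖z‖ < 1) :
    1 + ∑' k, b k * z ^ (k + 1) ≠ 0 := by
  intro hzero
  have := norm_tsum_mul_pow_succ_le hb hz.le
  rw [eq_neg_of_add_eq_zero_right hzero, norm_neg, norm_one] at this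
  nlinarith [norm_nonneg z]

lemma hasDerivAt_tsum_mul_pow_succ {M : ℝ} (hb : ∀ k, ‖b k‖ ≤ M) {z : ℂ}
    (hz : ‖z‖ < 1) :
    HasDerivAt (fun u => ∑' k, b k * u ^ (k + 1)) (∑' k, (k + 1) * b k * z ^ k) z := by
  set r := (1 + ‖z‖) / 2 with hr
  have hr₀ : 0 ≤ r := by positivity
  have hr₁ : ‖r‖ < 1 := by rw [Real.norm_of_nonneg hr₀]; linarith
  have hgeom : Summable fun n : ℕ => M * ((n : ℝ) ^ 1 * r ^ n + r ^ n) :=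
    ((summable_pow_mul_geometric_of_norm_lt_one 1 hr₁).add
      (summable_geometric_of_norm_lt_one hr₁)).mul_left M
  refine hasDerivAt_tsum_of_isPreconnected (g := fun k u => b k * u ^ (k + 1))
    (g' := fun k u => (k + 1) * b k * u ^ k) hgeom isOpen_ball
    (convex_ball (0 : ℂ) r).isPreconnected
    (fun k u _ => ?_) (fun k u hu => ?_) (mem_ball_self (by linarith [norm_nonneg z]))
    (by simp) (mem_ball_zero_iff.2 (by linarith))
  · simpa [mul_comm, mul_left_comm, mul_assoc] using (hasDerivAt_pow (k + 1) u).const_mul (b k)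
  · rw [mem_ball_zero_iff] at hu
    have hM : 0 ≤ M := (norm_nonneg _).trans (hb 0)
    have hk : ‖((k : ℂ) + 1)‖ = k + 1 := by exact_mod_cast Complex.norm_natCast (k + 1)
    rw [norm_mul, norm_mul, norm_pow, pow_one, hk, ← add_one_mul]
    calc (k + 1) * ‖b k‖ * ‖u‖ ^ k ≤ (k + 1) * M * r ^ k := by gcongr; exact hb k
      _ = M * ((k + 1) * r ^ k) := by ring

lemma mul_deriv_div_eq {M : ℝ} (hb : ∀ k, ‖b k‖ ≤ M) {z : ℂ} (hz : ‖z‖ < 1)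
    (hz₀ : z ≠ 0) (hG : 1 + ∑' k, b k * z ^ (k + 1) ≠ 0) :
    z * deriv (fun u => u / (1 + ∑' k, b k * u ^ (k + 1))) z
        / (z / (1 + ∑' k, b k * z ^ (k + 1)))
      = (1 + ∑' k, b k * z ^ (k + 1) - ∑' k, (k + 1) * b k * z ^ (k + 1))
        / (1 + ∑' k, b k * z ^ (k + 1)) := by
  have hderiv : HasDerivAt (fun u => u / (1 + ∑' k, b k * u ^ (k + 1))) _ z :=
    (hasDerivAt_id' z).div ((hasDerivAt_tsum_mul_pow_succ hb hz).const_add 1) hG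
  rw [hderiv.deriv, show ∑' k, (k + 1) * b k * z ^ (k + 1) = z * ∑' k, (k + 1) * b k * z ^ k by
    rw [← tsum_mul_left]; exact tsum_congr fun k => by ring]
  field_simp

lemma mul_one_add_tsum_sub_tsum_eq {μ : ℂ} (hb : Summable fun k => ‖b k‖)
    (hμb : Summable fun k : ℕ => ‖(μ - (k + 1)) * b k‖) {z : ℂ} (hz : ‖z‖ ≤ 1) :
    μ * (1 + ∑' k, b k * z ^ (k + 1)) - ∑' k, (k + 1) * b k * z ^ (k + 1)
      = μ + ∑' k, (μ - (k + 1)) * b k * z ^ (k + 1) := by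
  have hs₁ := ((summable_norm_mul_pow_succ hb hz).of_norm).mul_left μ
  have hs₂ := (summable_norm_mul_pow_succ hμb hz).of_norm
  rw [tsum_congr (β := ℕ) fun k => show (k + 1) * b k * z ^ (k + 1)
    = μ * (b k * z ^ (k + 1)) - (μ - (k + 1)) * b k * z ^ (k + 1) by ring,
    hs₁.tsum_sub hs₂, tsum_mul_left]
  ring

end PowerSeries

section WeightedCoefficients

variable {a R : ℝ} {b : ℕ → ℂ}

lemma summable_norm_of_weighted (hR : 0 < R)
    (hsum : Summable fun k : ℕ => (R + |1 - a - (k + 1)|) * ‖b k‖) :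
    Summable fun k => ‖b k‖ :=
  (hsum.div_const R).of_nonneg_of_le (fun _ => norm_nonneg _) fun k => by
    rw [le_div_iff₀ hR, mul_comm]; nlinarith [norm_nonneg (b k), abs_nonneg (1 - a - (k + 1))]

lemma tsum_norm_le_one_of_weighted (hR : 0 < R)
    (hsum : Summable fun k : ℕ => (R + |1 - a - (k + 1)|) * ‖b k‖)
    (hineq : |1 - a| + ∑' k : ℕ, (R + |1 - a - (k + 1)|) * ‖b k‖ ≤ R) :
    ∑' k, ‖b k‖ ≤ 1 := by
  have hle : R * ∑' k, ‖b k‖ ≤ ∑' k : ℕ, (R + |1 - a - (k + 1)|) * ‖b k‖ := by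
    rw [← tsum_mul_left]
    exact ((summable_norm_of_weighted hR hsum).mul_left R).tsum_le_tsum
      (fun k => by nlinarith [norm_nonneg (b k), abs_nonneg (1 - a - (k + 1))]) hsum
  nlinarith [abs_nonneg (1 - a)]

lemma norm_one_sub_mul_sub_tsum_lt (hR : 0 < R)
    (hsum : Summable fun k : ℕ => (R + |1 - a - (k + 1)|) * ‖b k‖)
    (hineq : |1 - a| + ∑' k : ℕ, (R + |1 - a - (k + 1)|) * ‖b k‖ ≤ R)
    (hb : ∃ k, b k ≠ 0) {z : ℂ} (hz : ‖z‖ < 1) :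
    ‖(1 - a) * (1 + ∑' k, b k * z ^ (k + 1)) - ∑' k, (k + 1) * b k * z ^ (k + 1)‖
      < R * ‖1 + ∑' k, b k * z ^ (k + 1)‖ := by
  set W : ℕ → ℝ := fun k => (R + |1 - a - (k + 1)|) * ‖b k‖
  set l : ℕ → ℂ := fun k => 1 - a - (k + 1)
  have hW : ∀ k, W k = R * ‖b k‖ + ‖l k * b k‖ := fun k => by
    have : l k = ((1 - a - (k + 1) : ℝ) : ℂ) := by push_cast; rfl
    rw [norm_mul, this, Complex.norm_real, Real.norm_eq_abs]; ring
  have hnorm := summable_norm_of_weighted hR hsum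
  have hlnorm : Summable fun k => ‖l k * b k‖ :=
    hsum.of_nonneg_of_le (fun _ => norm_nonneg _) fun k => by rw [hW]; nlinarith [norm_nonneg (b k)]
  have hsplit : ∑' k, W k = R * ∑' k, ‖b k‖ + ∑' k, ‖l k * b k‖ := by
    rw [← tsum_mul_left, ← (hnorm.mul_left R).tsum_add hlnorm]; exact tsum_congr hW
  obtain ⟨k₀, hk₀⟩ := hb
  have hWpos : 0 < ∑' k, W k := hsum.tsum_pos (fun k => by positivity) k₀ (by positivity)
  have hN : ‖(1 - a : ℂ) + ∑' k, l k * b k * z ^ (k + 1)‖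
      ≤ |1 - a| + ‖z‖ * ∑' k, ‖l k * b k‖ := by
    refine (norm_add_le _ _).trans
      (add_le_add (le_of_eq ?_) (norm_tsum_mul_pow_succ_le hlnorm hz.le))
    rw [← Complex.ofReal_one, ← Complex.ofReal_sub, Complex.norm_real, Real.norm_eq_abs]
  have hG : 1 - ‖z‖ * ∑' k, ‖b k‖ ≤ ‖1 + ∑' k, b k * z ^ (k + 1)‖ := by
    have := norm_sub_norm_le (1 : ℂ) (-∑' k, b k * z ^ (k + 1))
    rw [norm_one, norm_neg, sub_neg_eq_add] at this
    linarith [norm_tsum_mul_pow_succ_le hnorm hz.le]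
  rw [mul_one_add_tsum_sub_tsum_eq hnorm hlnorm hz.le]
  nlinarith [mul_pos (sub_pos.2 hz) hWpos, mul_le_mul_of_nonneg_left hG hR.le]

lemma norm_div_sub_lt_of_weighted (hR : 0 < R)
    (hsum : Summable fun k : ℕ => (R + |1 - a - (k + 1)|) * ‖b k‖)
    (hineq : |1 - a| + ∑' k : ℕ, (R + |1 - a - (k + 1)|) * ‖b k‖ ≤ R)
    (hb : ∃ k, b k ≠ 0) {z : ℂ} (hz : ‖z‖ < 1) :
    ‖(1 + ∑' k, b k * z ^ (k + 1) - ∑' k, (k + 1) * b k * z ^ (k + 1))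
      / (1 + ∑' k, b k * z ^ (k + 1)) - a‖ < R := by
  have hlt := norm_one_sub_mul_sub_tsum_lt hR hsum hineq hb hz
  set G := 1 + ∑' k, b k * z ^ (k + 1)
  set S := ∑' k, (k + 1) * b k * z ^ (k + 1)
  have hpos : 0 < ‖G‖ := by nlinarith [norm_nonneg ((1 - a) * G - S)]
  have hG₀ : G ≠ 0 := norm_pos_iff.1 hpos
  rwa [show (G - S) / G - a = ((1 - a) * G - S) / G by field_simp; ring, norm_div,
    div_lt_iff₀ hpos]

end WeightedCoefficients

/-- coefficient sufficient condition for
`f(z) = z/(1 + Σ_{k≥1} a_k z^k)` to belong to `𝒮*_℘`. -/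
theorem stmt_9 (a : ℝ) (ha₁ : 1 - 1 / Real.exp 1 < a) (ha₂ : a < 1 + Real.exp 1)
    (Ra : ℝ)
    (hRa : Ra = if a ≤ 1 + (Real.exp 1 - (Real.exp 1)⁻¹) / 2 then
      (a - 1) + (Real.exp 1)⁻¹ else Real.exp 1 - (a - 1))
    (c : ℕ → ℂ)
    (hsum : Summable (fun k : ℕ => (Ra + |1 - a - ((k : ℝ) + 1)|) * ‖c (k + 1)‖))
    (hineq : |1 - a| +
      ∑' k : ℕ, (Ra + |1 - a - ((k : ℝ) + 1)|) * ‖c (k + 1)‖ ≤ Ra) :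
    (∀ z ∈ ball (0 : ℂ) 1, Summable (fun k : ℕ => c (k + 1) * z ^ (k + 1))) ∧
    (∀ z ∈ ball (0 : ℂ) 1, (1 + ∑' k : ℕ, c (k + 1) * z ^ (k + 1)) ≠ 0) ∧
    ∀ z ∈ ball (0 : ℂ) 1, z ≠ 0 →
      ∃ w : ℂ, ‖w‖ < 1 ∧
        z * deriv (fun u : ℂ => u / (1 + ∑' k : ℕ, c (k + 1) * u ^ (k + 1))) z
          / (z / (1 + ∑' k : ℕ, c (k + 1) * z ^ (k + 1))) = 1 + w * Complex.exp w := by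
  have hR := radius_eq_cosh_sub_abs hRa
  have hRpos : 0 < Ra := hR ▸ sub_pos.2 (abs_sub_one_sub_sinh_one_lt_cosh_one ha₁ ha₂)
  have hnorm := summable_norm_of_weighted hRpos hsum
  have hnorm_le := tsum_norm_le_one_of_weighted hRpos hsum hineq
  have hbound : ∀ k, ‖c (k + 1)‖ ≤ 1 := fun k =>
    (hnorm.le_tsum k fun j _ => norm_nonneg _).trans hnorm_le
  have hG : ∀ z ∈ ball (0 : ℂ) 1, 1 + ∑' k : ℕ, c (k + 1) * z ^ (k + 1) ≠ 0 :=
    fun z hz => one_add_tsum_mul_pow_succ_ne_zero hnorm hnorm_le (mem_ball_zero_iff.1 hz)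
  refine ⟨fun z hz => (summable_norm_mul_pow_succ hnorm (mem_ball_zero_iff.1 hz).le).of_norm,
    hG, fun z hz hz₀ => ?_⟩
  rw [mul_deriv_div_eq hbound (mem_ball_zero_iff.1 hz) hz₀ (hG z hz)]
  by_cases hc : ∃ k, c (k + 1) ≠ 0
  · exact exists_eq_one_add_mul_exp
      (hR ▸ norm_div_sub_lt_of_weighted hRpos hsum hineq hc (mem_ball_zero_iff.1 hz))
  · push Not at hc
    exact ⟨0, by simp, by simp [hc]⟩
end

section
/- Let n, k be fixed positive integers and f(z) = z/(1 + z^k)^n. Let a be a real number with 1 − 1/e < a < 1 + e, set R_a = (a − 1) + 1/e if a ≤ 1 + (e − e^{−1})/2 and R_a = e − (a − 1) if a ≥ 1 + (e − e^{−1})/2, and assume R_a > |1 − a|. Then for every z with 0 < |z| < ( (R_a − |1 − a|)/(R_a + |1 − a − kn|) )^{1/k} there exists w ∈ ℂ with |w| < 1 such that zf'(z)/f(z) = 1 + w·e^w. -/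
open Complex Metric

/-!
With `ζ = z ^ k` one has `z f'(z) / f(z) = 1 - k n ζ / (1 + ζ)`, and this Möbius map sends the
disk `‖ζ‖ < (R_a - |1 - a|) / (R_a + |1 - a - k n|)` into the disk `‖q - a‖ < R_a`. It remains to
show that the disk of radius `R_a = min (c + e⁻¹) (e - c)` around `c = a - 1` lies in `g(𝔻)`,
where `g w = w * exp w`. Since `g` is an open map and the disk is connected and contains
`c ∈ g((-1, 1))`, it suffices that `g` maps the unit circle outside the disk. For `‖w‖ = 1` we have
`‖g w‖ ^ 2 ≥ 1 + (e - e⁻¹) * re (g w)` (for `w = a + b i` this is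
`sinh 1 * (a cos b - b sin b) ≤ sinh a`, a consequence of the convexity of `sinh` on `[0, 1]`) and
`re (g w) ≤ e`; together these give `‖g w - c‖ ≥ min (c + e⁻¹) (e - c)`.
-/

namespace Real

theorem convexOn_sinh_Ici : ConvexOn ℝ (Set.Ici 0) sinh := by
  refine MonotoneOn.convexOn_of_deriv (convex_Ici 0) continuous_sinh.continuousOn
    differentiable_sinh.differentiableOn ?_
  rw [deriv_sinh, interior_Ici]
  intro x hx y hy hxy
  exact cosh_le_cosh.2 (by rw [abs_of_pos hx, abs_of_pos hy]; exact hxy)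

theorem sinh_le_mul_sinh_one {x : ℝ} (h0 : 0 ≤ x) (h1 : x ≤ 1) : sinh x ≤ x * sinh 1 := by
  have := convexOn_sinh_Ici.2 Set.self_mem_Ici (Set.mem_Ici.2 zero_le_one)
    (sub_nonneg.2 h1) h0 (sub_add_cancel 1 x)
  simpa using this

theorem sinh_one_add_cosh_one_mul_sub_le_sinh {x : ℝ} (h0 : 0 ≤ x) (h1 : x ≤ 1) :
    sinh 1 + cosh 1 * (x - 1) ≤ sinh x := by
  rcases h1.lt_or_eq with h1 | rfl
  · have := convexOn_sinh_Ici.slope_le_of_hasDerivAt (Set.mem_Ici.2 h0)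
      (Set.mem_Ici.2 zero_le_one) h1 (hasDerivAt_sinh 1)
    rw [slope_def_field, div_le_iff₀ (sub_pos.2 h1)] at this
    linarith
  · simp

theorem sq_div_two_le_mul_sin {x : ℝ} (hx : |x| ≤ 1) : x ^ 2 / 2 ≤ x * sin x := by
  wlog h0 : 0 ≤ x generalizing x
  · simpa [sin_neg] using this (x := -x) (by rwa [abs_neg]) (by linarith)
  rcases h0.lt_or_eq with h0 | rfl
  · have := sin_gt_sub_cube h0
    have hx1 : x ≤ 1 := (abs_le.1 hx).2
    nlinarith [pow_le_one₀ h0.le hx1 (n := 2)]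
  · simp

theorem sinh_one_mul_le_sinh {a b : ℝ} (hab : a ^ 2 + b ^ 2 = 1) :
    sinh 1 * (a * cos b - b * sin b) ≤ sinh a := by
  have hb : b ^ 2 / 2 ≤ b * sin b :=
    sq_div_two_le_mul_sin (abs_le_of_sq_le_sq (by nlinarith) zero_le_one)
  have hs : 1 ≤ sinh 1 := self_le_sinh_iff.2 zero_le_one
  rcases le_total a 0 with ha | ha
  · have hcos : a * cos b ≤ a * (1 - b ^ 2 / 2) :=
      mul_le_mul_of_nonpos_left one_sub_sq_div_two_le_cos ha
    have hE : a * cos b - b * sin b ≤ a := by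
      nlinarith [mul_nonneg (by nlinarith : 0 ≤ 1 + a) (sq_nonneg b)]
    have hchord := sinh_le_mul_sinh_one (x := -a) (by linarith) (by nlinarith)
    rw [sinh_neg] at hchord
    nlinarith [mul_le_mul_of_nonneg_left hE (by linarith : (0 : ℝ) ≤ sinh 1)]
  · have hcos : a * cos b ≤ a := mul_le_of_le_one_right ha (cos_le_one b)
    have htan := sinh_one_add_cosh_one_mul_sub_le_sinh ha (by nlinarith)
    -- the tangent of `sinh` at `1` stays above `sinh 1 * (a - b ^ 2 / 2)` since `e⁻¹ ≤ 1 / 2`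
    have hgap : cosh 1 - sinh 1 ≤ 1 / 2 := by
      rw [cosh_sub_sinh, exp_neg, inv_le_comm₀ (exp_pos 1) (by norm_num)]
      linarith [add_one_le_exp 1]
    have hE : a * cos b - b * sin b ≤ a - b ^ 2 / 2 := by linarith
    nlinarith [mul_le_mul_of_nonneg_left hE (by linarith : (0 : ℝ) ≤ sinh 1),
      mul_nonneg (by nlinarith : 0 ≤ 1 - a)
        (by nlinarith : 0 ≤ sinh 1 * (1 + a) / 2 - (cosh 1 - sinh 1))]

end Real

theorem one_add_two_sinh_one_mul_re_le_norm_mul_exp_sq {w : ℂ} (hw : ‖w‖ = 1) :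
    1 + 2 * Real.sinh 1 * (w * exp w).re ≤ ‖w * exp w‖ ^ 2 := by
  have hab : w.re ^ 2 + w.im ^ 2 = 1 := by
    rw [← one_pow 2, ← hw, Complex.sq_norm, normSq_apply]
    ring
  have hre : (w * exp w).re = Real.exp w.re * (w.re * Real.cos w.im - w.im * Real.sin w.im) := by
    rw [mul_re, exp_re, exp_im]
    ring
  have hnorm : ‖w * exp w‖ = Real.exp w.re := by rw [norm_mul, hw, norm_exp, one_mul]
  have hsinh : Real.exp w.re ^ 2 - 1 = 2 * Real.exp w.re * Real.sinh w.re := by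
    rw [Real.sinh_eq, Real.exp_neg]
    field_simp
  rw [hre, hnorm]
  nlinarith [mul_le_mul_of_nonneg_left (Real.sinh_one_mul_le_sinh hab) (Real.exp_pos w.re).le]

theorem min_le_norm_mul_exp_sub {w : ℂ} (hw : ‖w‖ = 1) (c : ℝ) :
    min (c + (Real.exp 1)⁻¹) (Real.exp 1 - c) ≤ ‖w * exp w - c‖ := by
  set p := w * exp w
  have hsq : ‖p - c‖ ^ 2 = ‖p‖ ^ 2 - 2 * c * p.re + c ^ 2 := by
    rw [← Complex.normSq_eq_norm_sq, ← Complex.normSq_eq_norm_sq, Complex.normSq_apply,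
      Complex.normSq_apply]
    simp only [sub_re, sub_im, ofReal_re, ofReal_im]
    ring
  have hp : 1 + (Real.exp 1 - (Real.exp 1)⁻¹) * p.re ≤ ‖p‖ ^ 2 := by
    have := one_add_two_sinh_one_mul_re_le_norm_mul_exp_sq hw
    rwa [Real.sinh_eq, Real.exp_neg, mul_div_cancel₀ _ two_ne_zero] at this
  have hre : p.re ≤ Real.exp 1 := by
    calc p.re ≤ ‖p‖ := re_le_norm p
      _ = Real.exp w.re := by rw [norm_mul, hw, norm_exp, one_mul]
      _ ≤ Real.exp 1 := Real.exp_le_exp.2 ((re_le_norm w).trans hw.le)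
  have hee : Real.exp 1 * (Real.exp 1)⁻¹ = 1 := mul_inv_cancel₀ (Real.exp_pos 1).ne'
  rcases le_total p.re (-(Real.exp 1)⁻¹) with hlow | hlow
  · calc min (c + (Real.exp 1)⁻¹) (Real.exp 1 - c) ≤ c - p.re :=
          (min_le_left _ _).trans (by linarith)
      _ = -(p - c).re := by simp
      _ ≤ ‖p - c‖ := (neg_le_abs _).trans (abs_re_le_norm _)
  -- `‖p - c‖ ^ 2` is bounded below by an affine function of `p.re ∈ [-e⁻¹, e]`,
  -- whose values at the endpoints are `(c + e⁻¹) ^ 2` and `(e - c) ^ 2`.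
  rcases le_total (2 * c) (Real.exp 1 - (Real.exp 1)⁻¹) with hc | hc
  · refine (min_le_left _ _).trans <|
      (le_abs_self _).trans (abs_le_of_sq_le_sq ?_ (norm_nonneg _))
    nlinarith [mul_nonneg (sub_nonneg.2 hc) (neg_le_iff_add_nonneg.1 hlow)]
  · refine (min_le_right _ _).trans <|
      (le_abs_self _).trans (abs_le_of_sq_le_sq ?_ (norm_nonneg _))
    nlinarith [mul_nonneg (sub_nonneg.2 hc) (sub_nonneg.2 hre)]

theorem isOpenMap_mul_exp : IsOpenMap fun w : ℂ => w * exp w := by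
  refine (AnalyticOnNhd.is_constant_or_isOpenMap fun w _ => analyticAt_id.mul analyticAt_cexp)
    |>.resolve_left ?_
  rintro ⟨v, hv⟩
  have := (hv 1).trans (hv 0).symm
  simp at this

theorem ofReal_mem_image_mul_exp_ball {c : ℝ} (hc₁ : -(Real.exp 1)⁻¹ < c)
    (hc₂ : c < Real.exp 1) :
    (c : ℂ) ∈ (fun w : ℂ => w * exp w) '' ball 0 1 := by
  have hcont : ContinuousOn (fun x : ℝ => x * Real.exp x) (Set.Icc (-1) 1) := by fun_prop
  obtain ⟨x, hx, hxc⟩ := intermediate_value_Ioo (by norm_num) hcont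
    (show c ∈ Set.Ioo (-1 * Real.exp (-1)) (1 * Real.exp 1) by
      rw [Real.exp_neg]; constructor <;> linarith)
  refine ⟨x, by simpa [abs_lt] using hx, ?_⟩
  simp only [← hxc, ofReal_mul, ofReal_exp]

theorem ball_subset_image_mul_exp_ball {c : ℝ} (hc₁ : -(Real.exp 1)⁻¹ < c)
    (hc₂ : c < Real.exp 1) :
    ball (c : ℂ) (min (c + (Real.exp 1)⁻¹) (Real.exp 1 - c)) ⊆
      (fun w : ℂ => w * exp w) '' ball 0 1 := by
  set g : ℂ → ℂ := fun w => w * exp w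
  have hclosure : closure (g '' ball 0 1) ⊆ g '' closedBall 0 1 :=
    closure_minimal (Set.image_mono ball_subset_closedBall)
      ((isCompact_closedBall 0 1).image (by fun_prop)).isClosed
  refine (convex_ball _ _).isPreconnected.subset_of_closure_inter_subset
    (isOpenMap_mul_exp _ isOpen_ball)
    ⟨c, mem_ball_self (lt_min (by linarith) (by linarith)),
      ofReal_mem_image_mul_exp_ball hc₁ hc₂⟩ ?_
  rintro _ ⟨hv, hvB⟩
  obtain ⟨w, hw, rfl⟩ := hclosure hv
  rcases (mem_closedBall_zero_iff.1 hw).lt_or_eq with hw | hw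
  · exact ⟨w, mem_ball_zero_iff.2 hw, rfl⟩
  · exact absurd (min_le_norm_mul_exp_sub hw c) (not_le.2 (mem_ball_iff_norm.1 hvB))

theorem hasDerivAt_div_one_add_pow_pow (n k : ℕ) {z : ℂ} (hz : 1 + z ^ k ≠ 0) :
    HasDerivAt (fun u : ℂ => u / (1 + u ^ k) ^ n)
      ((1 + z ^ k - k * n * z ^ k) / (1 + z ^ k) ^ (n + 1)) z := by
  have hpow : HasDerivAt (fun u : ℂ => (1 + u ^ k) ^ n)
      (n * (1 + z ^ k) ^ (n - 1) * (k * z ^ (k - 1))) z :=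
    ((hasDerivAt_pow k z).const_add 1).pow n
  refine ((hasDerivAt_id z).div hpow (pow_ne_zero n hz)).congr_deriv ?_
  rcases n with _ | n <;> rcases k with _ | k
  all_goals simp only [id, Nat.add_sub_cancel]
  all_goals field_simp
  all_goals ring

theorem mul_deriv_div_one_add_pow_pow (n k : ℕ) {z : ℂ} (hz : z ≠ 0) (hzk : 1 + z ^ k ≠ 0) :
    z * deriv (fun u : ℂ => u / (1 + u ^ k) ^ n) z / (z / (1 + z ^ k) ^ n)
      = 1 - k * n * z ^ k / (1 + z ^ k) := by
  rw [(hasDerivAt_div_one_add_pow_pow n k hzk).deriv]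
  field_simp
  ring

theorem lt_one_of_lt_sub_abs_div_add_abs {t x y R : ℝ} (hR : |x| < R)
    (ht : t < (R - |x|) / (R + |y|)) : t < 1 :=
  ht.trans_le (div_le_one_of_le₀ (by linarith [abs_nonneg x, abs_nonneg y])
    (by linarith [abs_nonneg x, abs_nonneg y]))

theorem norm_one_sub_mul_div_one_add_sub_lt {a m R : ℝ} {ζ : ℂ} (hR : |1 - a| < R)
    (hζ : ‖ζ‖ < (R - |1 - a|) / (R + |1 - a - m|)) :
    ‖1 - m * ζ / (1 + ζ) - a‖ < R := by
  have hden : 0 < R + |1 - a - m| := by linarith [abs_nonneg (1 - a), abs_nonneg (1 - a - m)]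
  have hζ' : ‖ζ‖ * (R + |1 - a - m|) < R - |1 - a| := (lt_div_iff₀ hden).1 hζ
  have hζ1 : ‖ζ‖ < 1 := lt_one_of_lt_sub_abs_div_add_abs hR hζ
  have hnorm : 1 - ‖ζ‖ ≤ ‖1 + ζ‖ := by simpa using norm_sub_norm_le (1 : ℂ) (-ζ)
  have hne : 1 + ζ ≠ 0 := norm_pos_iff.1 (by linarith)
  have hnum : ‖((1 - a : ℝ) : ℂ) + ((1 - a - m : ℝ) : ℂ) * ζ‖ ≤
      |1 - a| + |1 - a - m| * ‖ζ‖ := by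
    simpa only [norm_mul, norm_real, Real.norm_eq_abs] using
      norm_add_le ((1 - a : ℝ) : ℂ) (((1 - a - m : ℝ) : ℂ) * ζ)
  calc ‖1 - m * ζ / (1 + ζ) - a‖
      = ‖((1 - a : ℝ) : ℂ) + ((1 - a - m : ℝ) : ℂ) * ζ‖ / ‖1 + ζ‖ := by
        rw [← norm_div]; congr 1; field_simp; push_cast; ring
    _ < R := by
        rw [div_lt_iff₀ (by linarith)]
        nlinarith [mul_le_mul_of_nonneg_left hnorm (abs_nonneg (1 - a) |>.trans hR.le)]

theorem stmt_10_general (n k : ℕ) (hk : 0 < k)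
    (a : ℝ) (ha₁ : 1 - 1 / Real.exp 1 < a) (ha₂ : a < 1 + Real.exp 1)
    (Ra : ℝ)
    (hRa : Ra = if a ≤ 1 + (Real.exp 1 - (Real.exp 1)⁻¹) / 2 then
      (a - 1) + (Real.exp 1)⁻¹ else Real.exp 1 - (a - 1))
    (hRa' : |1 - a| < Ra) :
    ∀ z : ℂ, 0 < ‖z‖ →
      ‖z‖ <
        ((Ra - |1 - a|) / (Ra + |1 - a - ((k * n : ℕ) : ℝ)|)) ^ ((1 : ℝ) / k) →
      ∃ w : ℂ, ‖w‖ < 1 ∧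
        z * deriv (fun u : ℂ => u / (1 + u ^ k) ^ n) z / (z / (1 + z ^ k) ^ n)
          = 1 + w * Complex.exp w := by
  intro z hz hzρ
  have hRmin : Ra = min ((a - 1) + (Real.exp 1)⁻¹) (Real.exp 1 - (a - 1)) := by
    rw [hRa]
    split_ifs with h
    · exact (min_eq_left (by linarith)).symm
    · exact (min_eq_right (by linarith)).symm
  set m : ℝ := ((k * n : ℕ) : ℝ) with hm
  have hρ : 0 ≤ (Ra - |1 - a|) / (Ra + |1 - a - m|) :=
    div_nonneg (by linarith) (by linarith [abs_nonneg (1 - a), abs_nonneg (1 - a - m)])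
  have hzk : ‖z ^ k‖ < (Ra - |1 - a|) / (Ra + |1 - a - m|) := by
    rwa [norm_pow, ← Real.rpow_natCast,
      ← Real.lt_rpow_inv_iff_of_pos (norm_nonneg z) hρ (by positivity), ← one_div]
  have hzk₁ : 1 + z ^ k ≠ 0 := fun h => by
    simpa [eq_neg_of_add_eq_zero_right h] using lt_one_of_lt_sub_abs_div_add_abs hRa' hzk
  obtain ⟨w, hw, hgw⟩ := ball_subset_image_mul_exp_ball (c := a - 1)
    (by rw [one_div] at ha₁; linarith) (by linarith)
    (show 1 - k * n * z ^ k / (1 + z ^ k) - 1 ∈ ball ((a - 1 : ℝ) : ℂ) _ by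
      have h := norm_one_sub_mul_div_one_add_sub_lt hRa' hzk
      push_cast [hm] at h
      rwa [mem_ball_iff_norm, ← hRmin, ofReal_sub, ofReal_one, sub_sub_sub_cancel_right])
  refine ⟨w, mem_ball_zero_iff.1 hw, ?_⟩
  rw [mul_deriv_div_one_add_pow_pow n k (norm_pos_iff.1 hz) hzk₁, show w * exp w = _ from hgw]
  ring

/-- the function `f(z) = z/(1 + z^k)^n` belongs to `𝒮*_℘` on the disk
`|z| < ((R_a − |1 − a|)/(R_a + |1 − a − kn|))^(1/k)`. -/
theorem stmt_10 (n k : ℕ) (hn : 0 < n) (hk : 0 < k)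
    (a : ℝ) (ha₁ : 1 - 1 / Real.exp 1 < a) (ha₂ : a < 1 + Real.exp 1)
    (Ra : ℝ)
    (hRa : Ra = if a ≤ 1 + (Real.exp 1 - (Real.exp 1)⁻¹) / 2 then
      (a - 1) + (Real.exp 1)⁻¹ else Real.exp 1 - (a - 1))
    (hRa' : |1 - a| < Ra) :
    ∀ z : ℂ, 0 < ‖z‖ →
      ‖z‖ <
        ((Ra - |1 - a|) / (Ra + |1 - a - ((k * n : ℕ) : ℝ)|)) ^ ((1 : ℝ) / k) →
      ∃ w : ℂ, ‖w‖ < 1 ∧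
        z * deriv (fun u : ℂ => u / (1 + u ^ k) ^ n) z / (z / (1 + z ^ k) ^ n)
          = 1 + w * Complex.exp w :=
  stmt_10_general n k hk a ha₁ ha₂ Ra hRa hRa'
end

section
/- Let p be a complex polynomial with p(0) = 1 and degree m ≥ 1, let R = min{|z| : p(z) = 0}, and let β ∈ ℂ. Let a be a real number with 1 − 1/e < a < 1 + e, set R_a = (a − 1) + 1/e if a ≤ 1 + (e − e^{−1})/2 and R_a = e − (a − 1) if a ≥ 1 + (e − e^{−1})/2, and assume R_a > |1 − a|. Then for every z with 0 < |z| < R·(R_a − |1 − a|)/(|β| + R_a − |1 − a|) there exists w ∈ ℂ with |w| < 1 such that 1 + (β/m)·z·p'(z)/p(z) = 1 + w·e^w. (This quantity equals zf'(z)/f(z) for the function f(z) = z·p(z)^{β/m} defined with the branch of p^{β/m} equal to 1 at 0, so f ∈ 𝒮*_℘ on this disk.) -/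
open Complex Metric Set

/-! On the disk in question `(β/m)·z·p'(z)/p(z)` has modulus below `R_a - |1 - a| ≤ 1/e`: from
`p'/p = Σ 1/(z - r)` over the roots, `|z p'(z)/p(z)| ≤ m|z|/(R - |z|)`. The map `w ↦ w e^w` is open
and has modulus at least `1/e` on the unit circle, so by connectedness the image of the unit disk
contains the whole disk of radius `1/e`. -/

theorem ball_subset_image_ball_of_isOpenMap {X Y : Type*} [MetricSpace X] [ProperSpace X]
    [NormedAddCommGroup Y] [NormedSpace ℝ Y] {f : X → Y} (hf : Continuous f)
    (hf_open : IsOpenMap f) {x : X} {r ρ : ℝ} (hr : 0 < r)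
    (hsphere : ∀ w ∈ sphere x r, ρ ≤ dist (f w) (f x)) :
    ball (f x) ρ ⊆ f '' ball x r := by
  rcases le_or_gt ρ 0 with hρ | hρ
  · simp [ball_eq_empty.mpr hρ]
  refine (convex_ball (f x) ρ).isPreconnected.subset_of_closure_inter_subset
    (hf_open _ isOpen_ball) ⟨f x, mem_ball_self hρ, mem_image_of_mem f (mem_ball_self hr)⟩ ?_
  rintro y ⟨hy_cl, hy_ball⟩
  have hcl : closure (f '' ball x r) ⊆ f '' closedBall x r :=
    closure_minimal (image_mono ball_subset_closedBall)
      ((isCompact_closedBall x r).image hf).isClosed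
  obtain ⟨w, hw, rfl⟩ := hcl hy_cl
  refine mem_image_of_mem f (lt_of_le_of_ne (mem_closedBall.mp hw) fun hwr => ?_)
  exact (hsphere w (mem_sphere.mpr hwr)).not_gt (mem_ball.mp hy_ball)

theorem ball_exp_one_inv_subset_image_mul_exp :
    ball (0 : ℂ) (Real.exp 1)⁻¹ ⊆ (fun w => w * exp w) '' ball 0 1 := by
  have hdiff : Differentiable ℂ fun w : ℂ => w * exp w := differentiable_id.mul differentiable_exp
  have hopen : IsOpenMap fun w : ℂ => w * exp w := by
    refine (AnalyticOnNhd.is_constant_or_isOpenMap fun w _ => hdiff.analyticAt w).resolve_left ?_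
    rintro ⟨c, hc⟩
    simpa [(hc 0).symm] using hc 1
  have hsphere : ∀ w ∈ sphere (0 : ℂ) 1, (Real.exp 1)⁻¹ ≤ dist (w * exp w) (0 * exp 0) := by
    intro w hw
    rw [mem_sphere_zero_iff_norm] at hw
    have hre : -1 ≤ w.re := (abs_le.mp ((abs_re_le_norm w).trans_eq hw)).1
    simpa [norm_exp, hw, Real.exp_neg] using Real.exp_le_exp.mpr hre
  simpa only [zero_mul] using
    ball_subset_image_ball_of_isOpenMap hdiff.continuous hopen one_pos hsphere

theorem Polynomial.Splits.norm_eval_derivative_div_eval_le {K : Type*} [NormedField K]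
    {p : Polynomial K} (hp : p.Splits) {z : K} {R : ℝ} (hz : ‖z‖ < R)
    (hroots : ∀ r ∈ p.roots, R ≤ ‖r‖) :
    ‖p.derivative.eval z / p.eval z‖ ≤ p.natDegree / (R - ‖z‖) := by
  have hRz : 0 < R - ‖z‖ := sub_pos.mpr hz
  by_cases hpz : p.eval z = 0
  · rw [hpz, div_zero, norm_zero]
    positivity
  have hterm : ∀ r ∈ p.roots, ‖1 / (z - r)‖ ≤ 1 / (R - ‖z‖) := fun r hr => by
    rw [norm_div, norm_one, norm_sub_rev]
    gcongr
    linarith [hroots r hr, norm_sub_norm_le r z]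
  calc ‖p.derivative.eval z / p.eval z‖
      = ‖(p.roots.map fun r => 1 / (z - r)).sum‖ := by
        rw [hp.eval_derivative_div_eval_of_ne_zero hpz]
    _ ≤ (p.roots.map fun r => ‖1 / (z - r)‖).sum := by
        simpa [Multiset.map_map] using norm_multiset_sum_le (p.roots.map fun r => 1 / (z - r))
    _ ≤ p.roots.card • (1 / (R - ‖z‖)) := by
        simpa using Multiset.sum_le_card_nsmul _ _ (Multiset.forall_mem_map_iff.mpr hterm)
    _ ≤ p.natDegree / (R - ‖z‖) := by
        rw [nsmul_eq_mul, mul_one_div]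
        gcongr
        exact_mod_cast p.card_roots'

theorem sub_abs_one_sub_le_exp_one_inv {a Ra : ℝ}
    (hRa : Ra = if a ≤ 1 + (Real.exp 1 - (Real.exp 1)⁻¹) / 2 then
      (a - 1) + (Real.exp 1)⁻¹ else Real.exp 1 - (a - 1)) :
    Ra - |1 - a| ≤ (Real.exp 1)⁻¹ := by
  have ha : a - 1 ≤ |1 - a| := by rw [abs_sub_comm]; exact le_abs_self _
  split_ifs at hRa with h <;> linarith

theorem norm_div_natCast_mul_le {𝕜 : Type*} [RCLike 𝕜] (x : 𝕜) (m : ℕ) :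
    ‖x / m‖ * m ≤ ‖x‖ := by
  rcases eq_or_ne m 0 with rfl | hm
  · simp
  · rw [norm_div, RCLike.norm_natCast, div_mul_cancel₀ _ (Nat.cast_ne_zero.mpr hm)]

theorem stmt_11_general (p : Polynomial ℂ)
    (m : ℕ) (hm : p.natDegree = m)
    (R : ℝ)
    (hR : IsLeast {r : ℝ | ∃ z : ℂ, Polynomial.eval z p = 0 ∧ ‖z‖ = r} R)
    (β : ℂ)
    (a : ℝ)
    (Ra : ℝ)
    (hRa : Ra = if a ≤ 1 + (Real.exp 1 - (Real.exp 1)⁻¹) / 2 then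
      (a - 1) + (Real.exp 1)⁻¹ else Real.exp 1 - (a - 1))
    (hRa' : |1 - a| < Ra) :
    ∀ z : ℂ, 0 < ‖z‖ →
      ‖z‖ < R * (Ra - |1 - a|) / (‖β‖ + Ra - |1 - a|) →
      ∃ w : ℂ, ‖w‖ < 1 ∧
        1 + (β / (m : ℂ)) * z * Polynomial.eval z (Polynomial.derivative p)
          / Polynomial.eval z p = 1 + w * Complex.exp w := by
  intro z _ hz
  rw [add_sub_assoc] at hz
  set t := Ra - |1 - a|
  have ht : 0 < t := sub_pos.mpr hRa'
  rw [lt_div_iff₀ (by positivity)] at hz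
  have hzR : ‖z‖ < R := by nlinarith [norm_nonneg z, norm_nonneg β]
  have hroots : ∀ r ∈ p.roots, R ≤ ‖r‖ := fun r hr =>
    hR.2 ⟨r, (Polynomial.mem_roots'.mp hr).2, rfl⟩
  have hlog := (IsAlgClosed.splits p).norm_eval_derivative_div_eval_le hzR hroots
  rw [hm] at hlog
  have hRz : 0 < R - ‖z‖ := sub_pos.mpr hzR
  have hc : ‖β / m * z * (p.derivative.eval z / p.eval z)‖ < (Real.exp 1)⁻¹ :=
    calc ‖β / m * z * (p.derivative.eval z / p.eval z)‖
        = ‖β / m‖ * ‖z‖ * ‖p.derivative.eval z / p.eval z‖ := by simp only [norm_mul]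
      _ ≤ ‖β / m‖ * ‖z‖ * (m / (R - ‖z‖)) := by gcongr
      _ = ‖β / m‖ * m * ‖z‖ / (R - ‖z‖) := by ring
      _ ≤ ‖β‖ * ‖z‖ / (R - ‖z‖) := by gcongr; exact norm_div_natCast_mul_le β m
      _ < t := by rw [div_lt_iff₀ hRz]; linarith
      _ ≤ (Real.exp 1)⁻¹ := sub_abs_one_sub_le_exp_one_inv hRa
  obtain ⟨w, hw, hwc⟩ := ball_exp_one_inv_subset_image_mul_exp (mem_ball_zero_iff.mpr hc)
  exact ⟨w, mem_ball_zero_iff.mp hw, by rw [mul_div_assoc, ← hwc]⟩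

/-- for a polynomial `p` with `p(0) = 1`, `deg p = m ≥ 1`, and `R`
the smallest modulus of a zero of `p`, the function `f(z) = z·p(z)^{β/m}`
belongs to `𝒮*_℘` on `|z| < R(R_a − |1 − a|)/(|β| + R_a − |1 − a|)` —
equivalently, `1 + (β/m)·z·p'(z)/p(z) ∈ ℘(𝔻)` there. -/
theorem stmt_11 (p : Polynomial ℂ) (hp0 : Polynomial.eval 0 p = 1)
    (m : ℕ) (hm : p.natDegree = m) (hm1 : 1 ≤ m)
    (R : ℝ)
    (hR : IsLeast {r : ℝ | ∃ z : ℂ, Polynomial.eval z p = 0 ∧ ‖z‖ = r} R)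
    (β : ℂ)
    (a : ℝ) (ha₁ : 1 - 1 / Real.exp 1 < a) (ha₂ : a < 1 + Real.exp 1)
    (Ra : ℝ)
    (hRa : Ra = if a ≤ 1 + (Real.exp 1 - (Real.exp 1)⁻¹) / 2 then
      (a - 1) + (Real.exp 1)⁻¹ else Real.exp 1 - (a - 1))
    (hRa' : |1 - a| < Ra) :
    ∀ z : ℂ, 0 < ‖z‖ →
      ‖z‖ < R * (Ra - |1 - a|) / (‖β‖ + Ra - |1 - a|) →
      ∃ w : ℂ, ‖w‖ < 1 ∧
        1 + (β / (m : ℂ)) * z * Polynomial.eval z (Polynomial.derivative p)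
          / Polynomial.eval z p = 1 + w * Complex.exp w :=
  stmt_11_general p m hm R hR β a Ra hRa hRa'
end

section
/- Let p be analytic on 𝔻 with p(0) = 1 and let β ≥ 1 be a real number. If the function z ↦ 1 + β·z·p'(z) is subordinate to ℘(z) = 1 + z e^z, then p(z) is subordinate to e^z. -/
open Complex Metric

/-- `F` is subordinate to `G` on the unit disk `𝔻`. -/
def Subordinate (F G : ℂ → ℂ) : Prop :=
  ∃ ω : ℂ → ℂ, AnalyticOn ℂ ω (ball (0 : ℂ) 1) ∧ ω 0 = 0 ∧
    (∀ z ∈ ball (0 : ℂ) 1, ω z ∈ ball (0 : ℂ) 1) ∧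
    ∀ z ∈ ball (0 : ℂ) 1, F z = G (ω z)

/-!
If `p` is not subordinate to `exp`, take `z₀` of least modulus with `p z₀ ∉ exp '' 𝔻`.
On the closed disk of radius `‖z₀‖` the function `q = log ∘ p` is holomorphic with
`‖q‖ ≤ 1 = ‖q z₀‖`, so Jack's lemma gives `z₀ q'(z₀) = c q(z₀)` with `c ≥ 1`. With `ζ = q z₀`
this reads `β z₀ p'(z₀) = βc ζ e^ζ`, where `‖ζ‖ = 1` and `βc ≥ 1`; by the subordination
hypothesis it also equals `w e^w` for some `‖w‖ < 1`. That is impossible: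
`arg (w e^w) = arg w + ‖w‖ sin (arg w)`, and equality of arguments forces
`cos (arg w) ≤ cos (arg ζ)`, whence `‖w e^w‖ < e^{cos (arg w)} ≤ ‖ζ e^ζ‖`.
-/

open Set
open scoped Real ComplexConjugate

lemma exists_mem_ball_notMem_and_mapsTo_closedBall_of_not_mapsTo {E F : Type*}
    [NormedAddCommGroup E] [NormedSpace ℝ E] [ProperSpace E] [TopologicalSpace F] {f : E → F}
    {R : ℝ} {U K : Set F}
    (hf : ContinuousOn f (ball 0 R)) (hU : IsOpen U) (hK : IsClosed K) (hUK : U ⊆ K)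
    (h0 : f 0 ∈ U) (h : ¬MapsTo f (ball 0 R) U) :
    ∃ z₀ ∈ ball (0 : E) R, f z₀ ∉ U ∧ MapsTo f (closedBall 0 ‖z₀‖) K := by
  obtain ⟨z₁, hz₁, hz₁U⟩ : ∃ z₁ ∈ ball (0 : E) R, f z₁ ∉ U := by
    simpa [MapsTo] using h
  have hsub : closedBall (0 : E) ‖z₁‖ ⊆ ball 0 R :=
    closedBall_subset_ball (mem_ball_zero_iff.mp hz₁)
  set B := closedBall (0 : E) ‖z₁‖ \ (ball 0 R ∩ f ⁻¹' U)
  have hB : IsCompact B :=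
    (isCompact_closedBall 0 _).diff (hf.isOpen_inter_preimage isOpen_ball hU)
  obtain ⟨z₀, ⟨hz₀, hz₀U⟩, hmin⟩ := hB.exists_isMinOn
    ⟨z₁, mem_closedBall_zero_iff.mpr le_rfl, fun h => hz₁U h.2⟩ continuous_norm.continuousOn
  have hz₀R : z₀ ∈ ball (0 : E) R := hsub hz₀
  have hinner : MapsTo f (ball 0 ‖z₀‖) U := by
    intro z hz
    by_contra hzU
    have hz₀z := hmin ⟨mem_closedBall_zero_iff.mpr
      ((mem_ball_zero_iff.mp hz).le.trans (mem_closedBall_zero_iff.mp hz₀)),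
      fun h => hzU h.2⟩
    exact (mem_ball_zero_iff.mp hz).not_ge hz₀z
  have hz₀0 : ‖z₀‖ ≠ 0 := by
    intro h
    exact hz₀U ⟨hz₀R, (norm_eq_zero.mp h) ▸ h0⟩
  refine ⟨z₀, hz₀R, fun h => hz₀U ⟨hz₀R, h⟩, ?_⟩
  rw [← closure_ball 0 hz₀0]
  refine fun z hz => closure_minimal (hinner.image_subset.trans hUK) hK ?_
  refine (hf.mono ?_).image_closure ⟨z, hz, rfl⟩
  rw [closure_ball 0 hz₀0]
  exact closedBall_subset_ball (mem_ball_zero_iff.mp hz₀R)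

namespace Real

lemma strictMonoOn_add_sin : StrictMonoOn (fun x => x + sin x) (Icc (-π) π) := by
  refine strictMonoOn_of_deriv_pos (convex_Icc _ _) (by fun_prop) fun x hx => ?_
  rw [interior_Icc] at hx
  have hcos : 0 < cos (x / 2) := cos_pos_of_mem_Ioo ⟨by linarith [hx.1], by linarith [hx.2]⟩
  have hderiv : HasDerivAt (fun x => x + sin x) (1 + cos x) x :=
    (hasDerivAt_id' x).add (hasDerivAt_sin x)
  rw [hderiv.deriv]
  have := cos_sq (x / 2)
  rw [mul_div_cancel₀ x two_ne_zero] at this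
  nlinarith

lemma add_mul_sin_mem_Ioc {x s : ℝ} (hx : x ∈ Ioc (-π) π) (hs : s ∈ Icc 0 1) :
    x + s * sin x ∈ Ioc (-π) π := by
  have hπ : -π ∈ Icc (-π) π := ⟨le_rfl, by linarith [pi_pos]⟩
  have hx' : x ∈ Icc (-π) π := Ioc_subset_Icc_self hx
  rcases le_or_gt 0 x with hx0 | hx0
  · have hsin := sin_nonneg_of_nonneg_of_le_pi hx0 hx.2
    have := strictMonoOn_add_sin.monotoneOn hx' ⟨by linarith [pi_pos], le_rfl⟩ hx.2
    simp only [sin_pi, add_zero] at this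
    constructor <;> nlinarith [hs.1, hs.2, pi_pos]
  · have hsin := sin_nonpos_of_nonpos_of_neg_pi_le hx0.le hx.1.le
    have := strictMonoOn_add_sin hπ hx' hx.1
    simp only [sin_neg, sin_pi, neg_zero, add_zero] at this
    constructor <;> nlinarith [hs.1, hs.2, pi_pos]

lemma cos_le_cos_of_add_sin_eq {x y s : ℝ} (hx : x ∈ Icc (-π) π) (hy : y ∈ Icc (-π) π)
    (hs : s ∈ Icc 0 1) (h : y + sin y = x + s * sin x) : cos x ≤ cos y := by
  wlog hx0 : 0 ≤ x generalizing x y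
  · have := this (x := -x) (y := -y) ⟨by linarith [hx.2], by linarith [hx.1]⟩
      ⟨by linarith [hy.2], by linarith [hy.1]⟩ (by simp only [sin_neg]; linarith) (by linarith)
    simpa only [cos_neg] using this
  have hsin := sin_nonneg_of_nonneg_of_le_pi hx0 hx.2
  have h0 : (0 : ℝ) ∈ Icc (-π) π := ⟨by linarith [pi_pos], pi_pos.le⟩
  have hy0 : 0 ≤ y := (strictMonoOn_add_sin.le_iff_le h0 hy).mp <| by
    simp only [sin_zero, add_zero]; nlinarith [hs.1]
  have hyx : y ≤ x := (strictMonoOn_add_sin.le_iff_le hy hx).mp <| by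
    nlinarith [hs.2]
  exact cos_le_cos_of_nonneg_of_le_pi hy0 hx.2 hyx

lemma mul_exp_mul_lt_exp {s c : ℝ} (hs0 : 0 < s) (hs1 : s < 1) (hc : -1 ≤ c) :
    s * exp (s * c) < exp c := by
  have hlog := log_lt_sub_one_of_pos hs0 hs1.ne
  calc s * exp (s * c) = exp (log s + s * c) := by rw [exp_add, exp_log hs0]
    _ < exp c := exp_lt_exp.mpr (by nlinarith)

end Real

namespace Complex

lemma arg_mul_exp_self {w : ℂ} (hw0 : w ≠ 0) (hw : ‖w‖ ≤ 1) :
    arg (w * exp w) = arg w + w.im := by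
  have hmem : arg w + w.im ∈ Ioc (-π) π := by
    rw [← norm_mul_sin_arg]
    exact Real.add_mul_sin_mem_Ioc ⟨neg_pi_lt_arg w, arg_le_pi w⟩ ⟨norm_nonneg w, hw⟩
  have hpolar : w * exp w =
      ↑(‖w‖ * Real.exp w.re) * (cos ↑(arg w + w.im) + sin ↑(arg w + w.im) * I) := by
    calc w * exp w = ‖w‖ * exp (arg w * I) * exp (w.re + w.im * I) := by
          rw [norm_mul_exp_arg_mul_I, re_add_im]
      _ = ↑(‖w‖ * Real.exp w.re) * exp (↑(arg w + w.im) * I) := by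
          push_cast
          rw [exp_add, add_mul, exp_add]
          ring
      _ = _ := by rw [exp_mul_I]
  rw [hpolar, arg_real_mul _ (by positivity), arg_cos_add_sin_mul_I hmem]

lemma mul_exp_self_ne {t : ℝ} (ht : 1 ≤ t) {ζ w : ℂ} (hζ : ‖ζ‖ = 1) (hw : ‖w‖ < 1) :
    w * exp w ≠ t * ζ * exp ζ := by
  intro h
  have hζ0 : ζ ≠ 0 := norm_ne_zero_iff.mp (by rw [hζ]; exact one_ne_zero)
  have hw0 : w ≠ 0 := by
    rintro rfl
    simp [hζ0, (by linarith : t ≠ 0)] at h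
  have harg : arg w + w.im = arg ζ + ζ.im := by
    rw [← arg_mul_exp_self hw0 hw.le, ← arg_mul_exp_self hζ0 hζ.le, h, mul_assoc,
      arg_real_mul _ (by linarith)]
  have hcos : Real.cos (arg w) ≤ Real.cos (arg ζ) := by
    refine Real.cos_le_cos_of_add_sin_eq (s := ‖w‖) ⟨(neg_pi_lt_arg w).le, arg_le_pi w⟩
      ⟨(neg_pi_lt_arg ζ).le, arg_le_pi ζ⟩ ⟨norm_nonneg w, hw.le⟩ ?_
    rw [← norm_mul_sin_arg, ← norm_mul_sin_arg, hζ, one_mul] at harg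
    linarith
  have hnorm := congrArg norm h
  simp only [norm_mul, norm_exp, norm_real, Real.norm_eq_abs, abs_of_pos (by linarith : 0 < t),
    hζ, mul_one, ← norm_mul_cos_arg, one_mul] at hnorm
  have hlt := Real.mul_exp_mul_lt_exp (norm_pos_iff.mpr hw0) hw (Real.neg_one_le_cos (arg w))
  have : Real.exp (Real.cos (arg w)) ≤ t * Real.exp (Real.cos (arg ζ)) :=
    calc Real.exp (Real.cos (arg w)) ≤ Real.exp (Real.cos (arg ζ)) := Real.exp_le_exp.mpr hcos
      _ ≤ t * Real.exp (Real.cos (arg ζ)) := le_mul_of_one_le_left (Real.exp_pos _).le ht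
  linarith

lemma exists_nonneg_conj_mul_eq_of_isMaxOn_closedBall {F : ℂ → ℂ} {F' : ℂ}
    (hF : HasDerivAt F F' 1) (hmax : IsMaxOn (‖F ·‖) (closedBall 0 1) 1) :
    ∃ a : ℝ, 0 ≤ a ∧ conj (F 1) * F' = a := by
  have hpath : ∀ {γ : ℝ → ℂ} {v : ℂ} {x : ℝ}, γ x = 1 → HasDerivAt γ v x →
      HasDerivAt (fun t => ‖F (γ t)‖ ^ 2) (2 * (conj (F 1) * F' * v).re) x := by
    intro γ v x hγx hγ
    have h := ((hγx ▸ hF).comp x hγ).norm_sq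
    rwa [Function.comp_apply, hγx, Complex.inner, mul_comm (F' * v), ← mul_assoc] at h
  have hmax_sq : ∀ z ∈ closedBall (0 : ℂ) 1, ‖F z‖ ^ 2 ≤ ‖F 1‖ ^ 2 := fun z hz =>
    pow_le_pow_left₀ (norm_nonneg _) (hmax hz) 2
  have him : (conj (F 1) * F').im = 0 := by
    have hγ : HasDerivAt (fun θ : ℝ => exp (θ * I)) I 0 := by
      simpa using ((hasDerivAt_id (0 : ℝ)).ofReal_comp.mul_const I).cexp
    have hloc : IsLocalMax (fun θ : ℝ => ‖F (exp (θ * I))‖ ^ 2) 0 :=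
      Filter.Eventually.of_forall fun θ => by
        simpa using hmax_sq _ (by simp [norm_exp_ofReal_mul_I])
    have := hloc.hasDerivAt_eq_zero (hpath (by simp) hγ)
    simp only [mul_I_re, neg_eq_zero, mul_eq_zero, two_ne_zero, false_or] at this
    exact this
  have hre : 0 ≤ (conj (F 1) * F').re := by
    have hγ : HasDerivAt (fun t : ℝ => (t : ℂ)) 1 1 := by
      simpa using (hasDerivAt_id (1 : ℝ)).ofReal_comp
    have hloc : IsLocalMaxOn (fun t : ℝ => ‖F t‖ ^ 2) (Icc 0 1) 1 :=
      IsMaxOn.localize fun t ht => by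
        simpa using hmax_sq _ (by simpa [abs_le] using ⟨by linarith [ht.1], ht.2⟩)
    have hcone : (-1 : ℝ) ∈ posTangentConeAt (Icc 0 1) 1 :=
      mem_posTangentConeAt_of_segment_subset <| by
        rw [add_neg_cancel, segment_symm, segment_eq_Icc zero_le_one]
    have := hloc.hasFDerivWithinAt_nonpos
      (hpath (by simp) hγ).hasFDerivAt.hasFDerivWithinAt hcone
    simpa using this
  exact ⟨_, hre, Complex.ext (by simp) (by simpa using him)⟩

-- Jack's lemma.
lemma exists_one_le_real_of_isMaxOn_norm {q : ℂ → ℂ} {z₀ : ℂ}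
    (hq : ∀ z ∈ closedBall (0 : ℂ) ‖z₀‖, DifferentiableAt ℂ q z) (hq0 : q 0 = 0)
    (hmax : IsMaxOn (‖q ·‖) (closedBall 0 ‖z₀‖) z₀) (hz₀ : q z₀ ≠ 0) :
    ∃ c : ℝ, 1 ≤ c ∧ z₀ * deriv q z₀ = c * q z₀ := by
  have hr : 0 < ‖z₀‖ := norm_pos_iff.mpr (by rintro rfl; exact hz₀ hq0)
  set M := ‖q z₀‖
  have hM : 0 < M := norm_pos_iff.mpr hz₀
  -- Schwarz's lemma inside the disk, maximality of `z₀` on its boundary circle.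
  have hschwarz : ∀ z ∈ closedBall (0 : ℂ) ‖z₀‖, ‖q z‖ ≤ M / ‖z₀‖ * ‖z‖ := by
    intro z hz
    rcases (mem_closedBall_zero_iff.mp hz).lt_or_eq with hlt | heq
    · have := dist_le_div_mul_dist_of_mapsTo_ball (R₂ := M)
        (fun w hw => (hq w (ball_subset_closedBall hw)).differentiableWithinAt)
        (fun w hw => by
          rw [hq0, mem_closedBall_zero_iff]
          exact hmax (ball_subset_closedBall hw))
        (mem_ball_zero_iff.mpr hlt)
      simpa [hq0] using this
    · rw [heq, div_mul_cancel₀ _ hr.ne']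
      exact hmax hz
  set F : ℂ → ℂ := fun z => q (z * z₀) / z
  have hF1 : F 1 = q z₀ := by simp [F]
  have hFmax : IsMaxOn (‖F ·‖) (closedBall 0 1) 1 := by
    intro z hz
    rw [mem_closedBall_zero_iff] at hz
    simp only [mem_ofPred_eq, hF1]
    rcases eq_or_ne z 0 with rfl | hz0
    · simp [F]
    · rw [norm_div, div_le_iff₀ (norm_pos_iff.mpr hz0)]
      calc ‖q (z * z₀)‖ ≤ M / ‖z₀‖ * ‖z * z₀‖ :=
            hschwarz _ (by simpa [norm_mul] using mul_le_of_le_one_left hr.le hz)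
        _ = M * ‖z‖ := by rw [norm_mul]; field_simp
  have hFderiv : HasDerivAt F (deriv q z₀ * z₀ - q z₀) 1 := by
    have h1 : HasDerivAt (fun z => q (z * z₀)) (deriv q z₀ * z₀) 1 := by
      have hqz₀ : HasDerivAt q (deriv q z₀) (1 * z₀) := by
        rw [one_mul]
        exact (hq z₀ (mem_closedBall_zero_iff.mpr le_rfl)).hasDerivAt
      exact hqz₀.comp 1 (hasDerivAt_mul_const z₀)
    have h2 := h1.div (hasDerivAt_id' 1) one_ne_zero
    simp only [one_mul, mul_one, one_pow, div_one] at h2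
    exact h2
  obtain ⟨a, ha, hFa⟩ := exists_nonneg_conj_mul_eq_of_isMaxOn_closedBall hFderiv hFmax
  rw [hF1] at hFa
  refine ⟨1 + a / M ^ 2, by have := div_nonneg ha (sq_nonneg M); linarith, ?_⟩
  have hconj : conj (q z₀) * q z₀ = (M : ℂ) ^ 2 := conj_mul' _
  have hM2 : (M : ℂ) ≠ 0 := by exact_mod_cast hM.ne'
  push_cast
  field_simp
  linear_combination q z₀ * hFa - (z₀ * deriv q z₀ - q z₀) * hconj

lemma mem_slitPlane_and_log_mem_of_mem_exp_image {s : Set ℂ} (hs : s ⊆ closedBall 0 1)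
    {v : ℂ} (hv : v ∈ exp '' s) : v ∈ slitPlane ∧ log v ∈ s := by
  obtain ⟨w, hw, rfl⟩ := hv
  have him := abs_le.mp ((abs_im_le_norm w).trans (mem_closedBall_zero_iff.mp (hs hw)))
  have hπ := Real.pi_gt_three
  refine ⟨Or.inl ?_, by rwa [log_exp (by linarith) (by linarith)]⟩
  rw [exp_re]
  exact mul_pos (Real.exp_pos _) (Real.cos_pos_of_mem_Ioo ⟨by linarith, by linarith⟩)

end Complex

lemma subordinate_exp_of_mapsTo {p : ℂ → ℂ} (hp : AnalyticOn ℂ p (ball 0 1)) (hp0 : p 0 = 1)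
    (h : MapsTo p (ball 0 1) (exp '' ball 0 1)) : Subordinate p exp := by
  have hlog : ∀ z ∈ ball (0 : ℂ) 1, p z ∈ slitPlane ∧ log (p z) ∈ ball (0 : ℂ) 1 := fun z hz =>
    mem_slitPlane_and_log_mem_of_mem_exp_image ball_subset_closedBall (h hz)
  refine ⟨fun z => log (p z), fun z hz => ?_, by simp [hp0], fun z hz => (hlog z hz).2,
    fun z hz => (exp_log (slitPlane_ne_zero (hlog z hz).1)).symm⟩
  exact ((analyticAt_clog (hlog z hz).1).comp
    (hp.analyticAt (isOpen_ball.mem_nhds hz))).analyticWithinAt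

/-- if `β ≥ 1` and `1 + β·z·p'(z) ≺ 1 + z e^z`, then `p ≺ e^z`. -/
theorem stmt_12 (p : ℂ → ℂ) (hp : AnalyticOn ℂ p (ball (0 : ℂ) 1)) (hp0 : p 0 = 1)
    (β : ℝ) (hβ : 1 ≤ β)
    (hsub : Subordinate (fun z => 1 + (β : ℂ) * z * deriv p z)
      (fun z => 1 + z * Complex.exp z)) :
    Subordinate p (fun z => Complex.exp z) := by
  obtain ⟨ω, -, -, hω, hωp⟩ := hsub
  apply subordinate_exp_of_mapsTo hp hp0
  by_contra hexit
  obtain ⟨z₀, hz₀, hz₀U, hK⟩ := exists_mem_ball_notMem_and_mapsTo_closedBall_of_not_mapsTo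
    hp.continuousOn (isOpenMap_exp _ isOpen_ball)
    ((isCompact_closedBall 0 1).image continuous_exp).isClosed
    (image_mono ball_subset_closedBall) ⟨0, mem_ball_self one_pos, by rw [exp_zero, hp0]⟩ hexit
  have hlogp : ∀ z ∈ closedBall (0 : ℂ) ‖z₀‖,
      p z ∈ slitPlane ∧ log (p z) ∈ closedBall (0 : ℂ) 1 := fun z hz =>
    mem_slitPlane_and_log_mem_of_mem_exp_image subset_rfl (hK hz)
  have hpd : ∀ z ∈ closedBall (0 : ℂ) ‖z₀‖, HasDerivAt (fun z => log (p z))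
      (deriv p z / p z) z := fun z hz =>
    (hp.differentiableOn.differentiableAt (isOpen_ball.mem_nhds
      (closedBall_subset_ball (mem_ball_zero_iff.mp hz₀) hz))).hasDerivAt.clog (hlogp z hz).1
  have hz₀mem : z₀ ∈ closedBall (0 : ℂ) ‖z₀‖ := mem_closedBall_zero_iff.mpr le_rfl
  have hpz₀ : p z₀ ≠ 0 := slitPlane_ne_zero (hlogp z₀ hz₀mem).1
  have hζ : ‖log (p z₀)‖ = 1 :=
    (mem_closedBall_zero_iff.mp (hlogp z₀ hz₀mem).2).antisymm <| not_lt.mp fun hlt =>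
      hz₀U ⟨_, mem_ball_zero_iff.mpr hlt, exp_log hpz₀⟩
  obtain ⟨c, hc, hjack⟩ := exists_one_le_real_of_isMaxOn_norm
    (fun z hz => (hpd z hz).differentiableAt) (by simp [hp0])
    (fun z hz => by simpa [hζ] using (hlogp z hz).2) (norm_ne_zero_iff.mp (by simp [hζ]))
  rw [(hpd z₀ hz₀mem).deriv] at hjack
  refine mul_exp_self_ne (one_le_mul_of_one_le_of_one_le hβ hc) hζ
    (mem_ball_zero_iff.mp (hω z₀ hz₀)) ?_
  rw [exp_log hpz₀]
  field_simp at hjack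
  push_cast
  linear_combination β * hjack - hωp z₀ hz₀
end

section
/- Let p be analytic on 𝔻 with p(0) = 1 and let β ≥ (e − 1)/(√2 − 1) be a real number. If the function z ↦ 1 + β·z·p'(z) is subordinate to ℘(z) = 1 + z e^z, then p(z) is subordinate to √(1+z), where √(1+z) = exp((1/2)·Log(1+z)) is the principal branch. -/
/-!
Schwarz's lemma applied to the subordinating map `ω` gives
`|β z p'(z)| = |ω(z) e^{ω(z)}| ≤ |z| e^{|z|}`, so `|p'(z)| ≤ e^{|z|} / β`. Integrating along the
radius, `|p(z) - 1| ≤ (e^{|z|} - 1) / β < (e - 1) / β ≤ √2 - 1`. Hence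
`|p² - 1| = |p - 1| |p + 1| < (√2 - 1)(√2 + 1) = 1`, so `p² - 1` is a subordinating map, and since
`Re p > 0`, `p` is the principal square root of `1 + (p² - 1)`.
-/

open Complex Metric

lemma Complex.exp_half_mul_log_sq {w : ℂ} (hw : 0 < w.re) :
    exp ((1 / 2 : ℂ) * log (w ^ 2)) = w := by
  have hw0 : w ^ 2 ≠ 0 := pow_ne_zero 2 fun h => by simp [h] at hw
  have := sq_cpow_two_inv hw
  rwa [cpow_def_of_ne_zero hw0, mul_comm, ← one_div] at this

lemma Complex.re_pos_of_norm_sub_one_lt_one {w : ℂ} (hw : ‖w - 1‖ < 1) : 0 < w.re := by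
  have := (abs_re_le_norm (w - 1)).trans_lt hw
  rw [sub_re, one_re, abs_lt] at this
  linarith

lemma Complex.norm_sq_sub_one_lt_one {w : ℂ} (hw : ‖w - 1‖ < Real.sqrt 2 - 1) :
    ‖w ^ 2 - 1‖ < 1 := by
  have hw2 : ‖w + 1‖ ≤ ‖w - 1‖ + 2 := by
    have := norm_add_le (w - 1) 2
    rwa [show w - 1 + 2 = w + 1 by ring, Complex.norm_two] at this
  have hsqrt : Real.sqrt 2 ^ 2 = 2 := Real.sq_sqrt zero_le_two
  rw [show w ^ 2 - 1 = (w - 1) * (w + 1) by ring, norm_mul]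
  nlinarith [norm_nonneg (w - 1), norm_nonneg (w + 1)]

lemma subordinate_sqrt_one_add {p : ℂ → ℂ} (hp : AnalyticOn ℂ p (ball 0 1)) (hp0 : p 0 = 1)
    (hre : ∀ z ∈ ball (0 : ℂ) 1, 0 < (p z).re) (hsq : ∀ z ∈ ball (0 : ℂ) 1, ‖p z ^ 2 - 1‖ < 1) :
    Subordinate p (fun z => exp ((1 / 2 : ℂ) * log (1 + z))) := by
  refine ⟨fun z => p z ^ 2 - 1, (hp.pow 2).sub analyticOn_const, by simp [hp0],
    fun z hz => mem_ball_zero_iff.mpr (hsq z hz), fun z hz => ?_⟩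
  simp only [add_sub_cancel, exp_half_mul_log_sq (hre z hz)]

lemma norm_sub_le_of_norm_deriv_le {E : Type*} [NormedAddCommGroup E] [NormedSpace ℂ E]
    {f : ℂ → E} {R : ℝ} {B B' : ℝ → ℝ} (hf : DifferentiableOn ℂ f (ball 0 R))
    (hB : ∀ t, HasDerivAt B (B' t) t) (bound : ∀ w ∈ ball (0 : ℂ) R, ‖deriv f w‖ ≤ B' ‖w‖)
    {z : ℂ} (hz : z ∈ ball 0 R) : ‖f z - f 0‖ ≤ B ‖z‖ - B 0 := by
  have hnorm : ∀ t ∈ Set.Icc (0 : ℝ) 1, ‖(t : ℂ) * z‖ = t * ‖z‖ := fun t ht => by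
    rw [norm_mul, norm_real, Real.norm_of_nonneg ht.1]
  have hseg : ∀ t ∈ Set.Icc (0 : ℝ) 1, (t : ℂ) * z ∈ ball (0 : ℂ) R := fun t ht => by
    rw [mem_ball_zero_iff, hnorm t ht]
    exact (mul_le_of_le_one_left (norm_nonneg z) ht.2).trans_lt (mem_ball_zero_iff.mp hz)
  have hderiv : ∀ t ∈ Set.Icc (0 : ℝ) 1,
      HasDerivAt (fun t : ℝ => f ((t : ℂ) * z) - f 0) (z • deriv f ((t : ℂ) * z)) t := by
    intro t ht
    have hlin : HasDerivAt (fun t : ℝ => (t : ℂ) * z) z t := by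
      simpa using (ofRealCLM.hasDerivAt (x := t)).mul_const z
    have := ((hf.differentiableAt (isOpen_ball.mem_nhds (hseg t ht))).hasDerivAt.scomp t hlin)
    exact this.sub_const (f 0)
  have hradial := image_norm_le_of_norm_deriv_right_le_deriv_boundary (a := 0) (b := 1)
    (B := fun t => B (t * ‖z‖) - B 0) (B' := fun t => B' (t * ‖z‖) * ‖z‖)
    (fun t ht => (hderiv t ht).continuousAt.continuousWithinAt)
    (fun t ht => (hderiv t (Set.Ico_subset_Icc_self ht)).hasDerivWithinAt)
    (by simp)
    (fun t => ((hB _).comp t ((hasDerivAt_id t).mul_const _)).sub_const _ |>.congr_deriv (by simp))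
    (fun t ht => by
      have ht' := Set.Ico_subset_Icc_self ht
      rw [norm_smul, mul_comm, ← hnorm t ht']
      exact mul_le_mul_of_nonneg_right (bound _ (hseg t ht')) (norm_nonneg z))
    (Set.right_mem_Icc.mpr zero_le_one)
  simpa using hradial

lemma norm_sub_one_le_of_subordinate_one_add_mul_exp {F : ℂ → ℂ}
    (hF : Subordinate F (fun z => 1 + z * exp z)) {z : ℂ} (hz : z ∈ ball (0 : ℂ) 1) :
    ‖F z - 1‖ ≤ ‖z‖ * Real.exp ‖z‖ := by
  obtain ⟨ω, hω, hω0, hωmaps, hFω⟩ := hF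
  have hschwarz : ‖ω z‖ ≤ ‖z‖ :=
    norm_le_norm_of_mapsTo_ball hω.differentiableOn
      (fun w hw => ball_subset_closedBall (hωmaps w hw)) hω0 (mem_ball_zero_iff.mp hz)
  rw [hFω z hz, add_sub_cancel_left, norm_mul, norm_exp]
  exact mul_le_mul hschwarz (Real.exp_le_exp.mpr ((re_le_norm _).trans hschwarz))
    (Real.exp_nonneg _) (norm_nonneg _)

lemma norm_deriv_le_of_subordinate_one_add_mul_exp {p : ℂ → ℂ} {β : ℝ} (hβ : 0 < β)
    (hp : AnalyticOn ℂ p (ball 0 1))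
    (hsub : Subordinate (fun z => 1 + (β : ℂ) * z * deriv p z) (fun z => 1 + z * exp z))
    {w : ℂ} (hw : w ∈ ball (0 : ℂ) 1) : ‖deriv p w‖ ≤ Real.exp ‖w‖ / β := by
  have hne : ∀ w ∈ ball (0 : ℂ) 1, w ≠ 0 → ‖deriv p w‖ ≤ Real.exp ‖w‖ / β := by
    intro w hw hw0
    have h := norm_sub_one_le_of_subordinate_one_add_mul_exp hsub hw
    rw [add_sub_cancel_left, norm_mul, norm_mul, norm_real, Real.norm_of_nonneg hβ.le] at h
    rw [le_div_iff₀ hβ]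
    exact le_of_mul_le_mul_left (by linarith) (norm_pos_iff.mpr hw0)
  rcases eq_or_ne w 0 with rfl | hw0
  · -- the subordination identity says nothing at `0`: pass to the limit along `w ≠ 0`
    have hcont : ContinuousAt (deriv p) 0 :=
      ((isOpen_ball.analyticOn_iff_analyticOnNhd.mp hp).deriv 0 hw).continuousAt
    refine le_of_tendsto_of_tendsto (b := nhdsWithin (0 : ℂ) {0}ᶜ)
      (hcont.norm.tendsto.mono_left nhdsWithin_le_nhds)
      ((by fun_prop : Continuous fun w : ℂ => Real.exp ‖w‖ / β).tendsto 0 |>.mono_left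
        nhdsWithin_le_nhds) ?_
    filter_upwards [self_mem_nhdsWithin, nhdsWithin_le_nhds (isOpen_ball.mem_nhds hw)]
      with w hw0 hw using hne w hw hw0
  · exact hne w hw hw0

/-- if `β ≥ (e − 1)/(√2 − 1)` and `1 + β·z·p'(z) ≺ 1 + z e^z`,
then `p ≺ √(1 + z)` (principal branch). -/
theorem stmt_13 (p : ℂ → ℂ) (hp : AnalyticOn ℂ p (ball (0 : ℂ) 1)) (hp0 : p 0 = 1)
    (β : ℝ) (hβ : (Real.exp 1 - 1) / (Real.sqrt 2 - 1) ≤ β)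
    (hsub : Subordinate (fun z => 1 + (β : ℂ) * z * deriv p z)
      (fun z => 1 + z * Complex.exp z)) :
    Subordinate p (fun z => Complex.exp ((1 / 2 : ℂ) * Complex.log (1 + z))) := by
  have hsqrt : 0 < Real.sqrt 2 - 1 := sub_pos.mpr Real.one_lt_sqrt_two
  have hβ0 : 0 < β := (div_pos (by linarith [Real.add_one_lt_exp one_ne_zero]) hsqrt).trans_le hβ
  have hclose : ∀ z ∈ ball (0 : ℂ) 1, ‖p z - 1‖ < Real.sqrt 2 - 1 := by
    intro z hz
    have hgrowth := norm_sub_le_of_norm_deriv_le hp.differentiableOn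
      (fun t => (Real.hasDerivAt_exp t).div_const β)
      (fun w hw => norm_deriv_le_of_subordinate_one_add_mul_exp hβ0 hp hsub hw) hz
    calc ‖p z - 1‖ ≤ Real.exp ‖z‖ / β - Real.exp 0 / β := by rwa [hp0] at hgrowth
      _ < (Real.exp 1 - 1) / β := by
        rw [Real.exp_zero, ← sub_div]
        gcongr
        exact mem_ball_zero_iff.mp hz
      _ ≤ Real.sqrt 2 - 1 := by rwa [div_le_iff₀ hβ0, mul_comm, ← div_le_iff₀ hsqrt]
  have hsqrt_lt : Real.sqrt 2 - 1 < 1 := by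
    linarith [(Real.sqrt_lt' two_pos).mpr (by norm_num : (2 : ℝ) < 2 ^ 2)]
  exact subordinate_sqrt_one_add hp hp0
    (fun z hz => re_pos_of_norm_sub_one_lt_one ((hclose z hz).trans hsqrt_lt))
    (fun z hz => norm_sq_sub_one_lt_one (hclose z hz))
end

section
/- Let p be analytic on 𝔻 with p(0) = 1 and p(z) ≠ 0 for all z ∈ 𝔻, and let β ≥ e − 1 be a real number. If the function z ↦ 1 + β·z·p'(z)/p(z) is subordinate to ℘(z) = 1 + z e^z, then p(z) is subordinate to e^z. -/
/-!
Since `p` has no zeros on the disk, `p = exp q` for the primitive `q` of `p'/p` with `q 0 = 0`.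
The subordination gives `β z q'(z) = ω(z) e^{ω(z)}` with `‖ω(z)‖ ≤ ‖z‖` by Schwarz's lemma,
so `‖q'(w)‖ ≤ e^{‖w‖}/β`. Integrating along the radius, `‖q(z)‖ ≤ (e^{‖z‖} - 1)/β < (e - 1)/β ≤ 1`,
so `q` is the Schwarz function exhibiting `p ≺ exp`.
-/

open Complex Metric

open Set Filter Topology

theorem exists_hasDerivAt_logDeriv_and_exp_eq {p : ℂ → ℂ} {c : ℂ} {r : ℝ} (hr : 0 < r)
    (hp : DifferentiableOn ℂ p (ball c r)) (hp_ne : ∀ z ∈ ball c r, p z ≠ 0)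
    {y : ℂ} (hy : exp y = p c) :
    ∃ q : ℂ → ℂ, q c = y ∧ ∀ z ∈ ball c r, HasDerivAt q (logDeriv p z) z ∧ exp (q z) = p z := by
  have hlog : DifferentiableOn ℂ (logDeriv p) (ball c r) :=
    ((hp.analyticOnNhd isOpen_ball).deriv.differentiableOn).div hp hp_ne
  obtain ⟨q, hqc, hq⟩ := hlog.isExactOn_ball.with_val_at c y
  have hexpq : DifferentiableOn ℂ (exp ∘ q) (ball c r) := fun z hz =>
    (hq z hz).differentiableAt.cexp.differentiableWithinAt
  have hlogDeriv : EqOn (logDeriv (exp ∘ q)) (logDeriv p) (ball c r) := fun z hz => by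
    rw [logDeriv_comp differentiableAt_exp (hq z hz).differentiableAt, logDeriv_exp,
      (hq z hz).deriv, Pi.one_apply, one_mul]
  obtain ⟨a, -, ha⟩ := (logDeriv_eqOn_iff hexpq hp isOpen_ball (convex_ball c r).isPreconnected
    hp_ne fun z _ => exp_ne_zero _).mp hlogDeriv
  have ha_one : a = 1 := by
    have := ha (mem_ball_self hr)
    simp only [Function.comp_apply, hqc, hy, Pi.smul_apply, smul_eq_mul] at this
    exact (mul_eq_right₀ (hp_ne c (mem_ball_self hr))).mp this.symm
  refine ⟨q, hqc, fun z hz => ⟨hq z hz, ?_⟩⟩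
  simpa [ha_one] using ha hz

theorem norm_sub_le_of_norm_deriv_le_radial {E : Type*} [NormedAddCommGroup E] [NormedSpace ℂ E]
    {f f' : ℂ → E} {B b : ℝ → ℝ} {r : ℝ} (hf : ∀ w ∈ ball (0 : ℂ) r, HasDerivAt f (f' w) w)
    (hB : ∀ s, HasDerivAt B (b s) s) (hbound : ∀ w ∈ ball (0 : ℂ) r, ‖f' w‖ ≤ b ‖w‖)
    {z : ℂ} (hz : z ∈ ball (0 : ℂ) r) : ‖f z - f 0‖ ≤ B ‖z‖ - B 0 := by
  have hr : 0 < r := pos_of_mem_ball hz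
  have hseg : ∀ t ∈ Icc (0 : ℝ) 1, t • z ∈ ball (0 : ℂ) r := fun t ht =>
    (convex_ball (0 : ℂ) r).smul_mem_of_zero_mem (mem_ball_self hr) hz ht
  have hderiv : ∀ t ∈ Icc (0 : ℝ) 1,
      HasDerivAt (fun t : ℝ => f (t • z) - f 0) (z • f' (t • z)) t := fun t ht =>
    ((hf _ (hseg t ht)).scomp t ((hasDerivAt_id t).smul_const z)).sub_const _ |>.congr_deriv
      (by simp)
  have := image_norm_le_of_norm_deriv_right_le_deriv_boundary
    (f := fun t : ℝ => f (t • z) - f 0) (B := fun t => B (t * ‖z‖) - B 0)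
    (fun t ht => (hderiv t ht).continuousAt.continuousWithinAt)
    (fun t ht => (hderiv t (Ico_subset_Icc_self ht)).hasDerivWithinAt)
    (by simp) (fun t => ((hB _).comp t ((hasDerivAt_id t).mul_const ‖z‖)).sub_const _)
    (fun t ht => by
      have h := hbound _ (hseg t (Ico_subset_Icc_self ht))
      rw [norm_smul, Real.norm_of_nonneg ht.1] at h
      rw [norm_smul, id, one_mul, mul_comm (b _)]
      exact mul_le_mul_of_nonneg_left h (norm_nonneg z))
    (right_mem_Icc.mpr zero_le_one)
  simpa using this

theorem norm_logDeriv_le_of_subordinate {p : ℂ → ℂ} (hp : AnalyticOn ℂ p (ball (0 : ℂ) 1))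
    (hp_ne : ∀ z ∈ ball (0 : ℂ) 1, p z ≠ 0) {β : ℝ} (hβ : 0 < β)
    (hsub : Subordinate (fun z => 1 + (β : ℂ) * z * deriv p z / p z)
      (fun z => 1 + z * Complex.exp z)) :
    ∀ w ∈ ball (0 : ℂ) 1, ‖logDeriv p w‖ ≤ Real.exp ‖w‖ / β := by
  obtain ⟨ω, hω, hω0, hω_maps, hω_eq⟩ := hsub
  have hp' : AnalyticOnNhd ℂ p (ball (0 : ℂ) 1) := isOpen_ball.analyticOn_iff_analyticOnNhd.mp hp
  have hschwarz : ∀ w ∈ ball (0 : ℂ) 1, ‖ω w‖ ≤ ‖w‖ := fun w hw =>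
    norm_le_norm_of_mapsTo_ball hω.differentiableOn
      (fun z hz => ball_subset_closedBall (hω_maps z hz)) hω0 (mem_ball_zero_iff.mp hw)
  have hpunct : ∀ w ∈ ball (0 : ℂ) 1, w ≠ 0 → ‖logDeriv p w‖ ≤ Real.exp ‖w‖ / β := by
    intro w hw hw0
    have hid : (β : ℂ) * w * logDeriv p w = ω w * exp (ω w) := by
      rw [logDeriv_apply, ← mul_div_assoc]
      linear_combination hω_eq w hw
    have hnorm : β * ‖w‖ * ‖logDeriv p w‖ ≤ ‖w‖ * Real.exp ‖w‖ := by
      calc β * ‖w‖ * ‖logDeriv p w‖ = ‖ω w‖ * Real.exp (ω w).re := by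
            simpa [norm_exp, abs_of_pos hβ] using congrArg norm hid
        _ ≤ ‖w‖ * Real.exp ‖w‖ := by
            have hω_le := hschwarz w hw
            gcongr
            exact (re_le_norm _).trans hω_le
    rw [le_div_iff₀ hβ]
    nlinarith [norm_pos_iff.mpr hw0]
  intro w hw
  rcases ne_or_eq w 0 with hw0 | rfl
  · exact hpunct w hw hw0
  have hcont : ContinuousAt (logDeriv p) 0 :=
    ((hp'.deriv 0 hw).continuousAt).div (hp' 0 hw).continuousAt (hp_ne 0 hw)
  have hbound : Continuous fun w : ℂ => Real.exp ‖w‖ / β := by fun_prop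
  have hnear : ∀ᶠ w in 𝓝[≠] (0 : ℂ), ‖logDeriv p w‖ ≤ Real.exp ‖w‖ / β :=
    eventually_nhdsWithin_iff.mpr <| eventually_of_mem (ball_mem_nhds 0 one_pos) fun w hw hw0 =>
      hpunct w hw hw0
  exact le_of_tendsto_of_tendsto (hcont.norm.tendsto.mono_left nhdsWithin_le_nhds)
    ((hbound.tendsto 0).mono_left nhdsWithin_le_nhds) hnear

/-- if `β ≥ e − 1` and `1 + β·z·p'(z)/p(z) ≺ 1 + z e^z`,
then `p ≺ e^z`. -/
theorem stmt_14 (p : ℂ → ℂ) (hp : AnalyticOn ℂ p (ball (0 : ℂ) 1)) (hp0 : p 0 = 1)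
    (hpne : ∀ z ∈ ball (0 : ℂ) 1, p z ≠ 0)
    (β : ℝ) (hβ : Real.exp 1 - 1 ≤ β)
    (hsub : Subordinate (fun z => 1 + (β : ℂ) * z * deriv p z / p z)
      (fun z => 1 + z * Complex.exp z)) :
    Subordinate p (fun z => Complex.exp z) := by
  have hβ_pos : 0 < β := by linarith [Real.add_one_le_exp (1 : ℝ)]
  obtain ⟨q, hq0, hq⟩ := exists_hasDerivAt_logDeriv_and_exp_eq one_pos hp.differentiableOn hpne
    (y := 0) (by rw [exp_zero, hp0])
  have hq_lt : ∀ z ∈ ball (0 : ℂ) 1, ‖q z‖ < 1 := by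
    intro z hz
    have h := norm_sub_le_of_norm_deriv_le_radial (fun w hw => (hq w hw).1)
      (fun s => (Real.hasDerivAt_exp s).div_const β)
      (norm_logDeriv_le_of_subordinate hp hpne hβ_pos hsub) hz
    rw [hq0, sub_zero, Real.exp_zero, ← sub_div] at h
    calc ‖q z‖ ≤ (Real.exp ‖z‖ - 1) / β := h
      _ < (Real.exp 1 - 1) / β := by gcongr; exact mem_ball_zero_iff.mp hz
      _ ≤ 1 := (div_le_one hβ_pos).mpr hβ
  have hq_diff : DifferentiableOn ℂ q (ball (0 : ℂ) 1) := fun z hz =>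
    (hq z hz).1.differentiableAt.differentiableWithinAt
  exact ⟨q, (hq_diff.analyticOnNhd isOpen_ball).analyticOn, hq0,
    fun z hz => mem_ball_zero_iff.mpr (hq_lt z hz), fun z hz => (hq z hz).2.symm⟩
end

section
/- Let p be analytic on 𝔻 with p(0) = 1 and p(z) ≠ 0 for all z ∈ 𝔻, and let β ≥ (e − 1)/(1 − 1/e) be a real number. If the function z ↦ 1 + β·z·p'(z)/p(z)² is subordinate to ℘(z) = 1 + z e^z, then p(z) is subordinate to e^z. -/
/-!
Put `q = 1 - 1/p`, so that `q' = p'/p²` and the hypothesis reads `β ζ q'(ζ) = ω(ζ) e^{ω(ζ)}`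
for a Schwarz function `ω`. Since `|ω(ζ)| ≤ |ζ|`, this gives `|q'(ζ)| ≤ e^{|ζ|}/β`, and
integrating along the radius `|q(z)| ≤ (e^{|z|} - 1)/β < (e - 1)/e = 1 - 1/e`, because the bound
on `β` says `β ≥ e`. Then `|log(1/p)| = |log(1 - q)| ≤ -log(1 - |q|) < 1`, so `log p = -log(1/p)`
is a Schwarz function with `p = exp ∘ log p`.
-/

open Complex Metric

open Set Filter Topology

theorem norm_sub_le_of_norm_deriv_le_mul_exp {E : Type*} [NormedAddCommGroup E]
    [NormedSpace ℂ E] {f : ℂ → E} {R c : ℝ} (hf : DifferentiableOn ℂ f (ball 0 R))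
    (hf' : ∀ ζ ∈ ball (0 : ℂ) R, ‖deriv f ζ‖ ≤ c * Real.exp ‖ζ‖) {z : ℂ}
    (hz : z ∈ ball (0 : ℂ) R) :
    ‖f z - f 0‖ ≤ c * (Real.exp ‖z‖ - 1) := by
  have hnorm : ∀ t ∈ Icc (0 : ℝ) 1, ‖(t : ℂ) * z‖ = t * ‖z‖ := fun t ht ↦ by
    rw [norm_mul, norm_real, Real.norm_of_nonneg ht.1]
  have hseg : ∀ t ∈ Icc (0 : ℝ) 1, (t : ℂ) * z ∈ ball (0 : ℂ) R := fun t ht ↦ by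
    rw [mem_ball_zero_iff, hnorm t ht]
    exact (mul_le_of_le_one_left (norm_nonneg z) ht.2).trans_lt (mem_ball_zero_iff.mp hz)
  have hderiv : ∀ t ∈ Icc (0 : ℝ) 1,
      HasDerivAt (fun s : ℝ ↦ f ((s : ℂ) * z) - f 0) (z • deriv f ((t : ℂ) * z)) t := by
    intro t ht
    have hline : HasDerivAt (fun s : ℝ ↦ (s : ℂ) * z) z t := by
      simpa using (hasDerivAt_id t).ofReal_comp.mul_const z
    exact (((hf.differentiableAt (isOpen_ball.mem_nhds (hseg t ht))).hasDerivAt).scomp t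
      hline).sub_const (f 0)
  have hB : ∀ t : ℝ, HasDerivAt (fun s ↦ c * (Real.exp (s * ‖z‖) - 1))
      (c * (Real.exp (t * ‖z‖) * ‖z‖)) t := fun t ↦
    ((((hasDerivAt_id t).mul_const ‖z‖).exp.sub_const 1).const_mul c).congr_deriv (by simp)
  have hfence := image_norm_le_of_norm_deriv_right_le_deriv_boundary
    (fun t ht ↦ (hderiv t ht).continuousAt.continuousWithinAt)
    (fun t ht ↦ (hderiv t (Ico_subset_Icc_self ht)).hasDerivWithinAt) (by simp) hB
    (fun t ht ↦ by
      have ht' := Ico_subset_Icc_self ht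
      have hbound := hf' _ (hseg t ht')
      rw [hnorm t ht'] at hbound
      rw [norm_smul]
      exact (mul_le_mul_of_nonneg_left hbound (norm_nonneg z)).trans_eq (by ring))
    (right_mem_Icc.mpr zero_le_one)
  simpa using hfence

theorem norm_le_inv_mul_exp_of_mul_eq_mul_exp {g w : ℂ → ℂ} {β R : ℝ} (hβ : 0 < β)
    (hg : ContinuousOn g (ball 0 R)) (hw : DifferentiableOn ℂ w (ball 0 R)) (hw0 : w 0 = 0)
    (hwmap : MapsTo w (ball 0 R) (ball 0 R))
    (heq : ∀ ζ ∈ ball (0 : ℂ) R, β * ζ * g ζ = w ζ * exp (w ζ)) {ζ : ℂ}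
    (hζ : ζ ∈ ball (0 : ℂ) R) :
    ‖g ζ‖ ≤ β⁻¹ * Real.exp ‖ζ‖ := by
  have hpunct : ∀ ζ ∈ ball (0 : ℂ) R, ζ ≠ 0 → ‖g ζ‖ ≤ β⁻¹ * Real.exp ‖ζ‖ := by
    intro ζ hζ hζ0
    have hschwarz : ‖w ζ‖ ≤ ‖ζ‖ := norm_le_norm_of_mapsTo_ball hw
      (hwmap.mono_right ball_subset_closedBall) hw0 (mem_ball_zero_iff.mp hζ)
    have hexp : ‖exp (w ζ)‖ ≤ Real.exp ‖ζ‖ := by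
      rw [norm_exp]
      exact Real.exp_le_exp.mpr ((re_le_norm _).trans hschwarz)
    have hnorm : β * ‖ζ‖ * ‖g ζ‖ = ‖w ζ‖ * ‖exp (w ζ)‖ := by
      rw [← norm_mul, ← heq ζ hζ, norm_mul, norm_mul, norm_real, Real.norm_of_nonneg hβ.le]
    rw [inv_mul_eq_div, le_div_iff₀' hβ, ← mul_le_mul_iff_of_pos_left (norm_pos_iff.mpr hζ0)]
    calc ‖ζ‖ * (β * ‖g ζ‖) = ‖w ζ‖ * ‖exp (w ζ)‖ := by rw [← hnorm]; ring
      _ ≤ ‖ζ‖ * Real.exp ‖ζ‖ := mul_le_mul hschwarz hexp (norm_nonneg _) (norm_nonneg _)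
  rcases ne_or_eq ζ 0 with hζ0 | rfl
  · exact hpunct ζ hζ hζ0
  have hball : ball (0 : ℂ) R ∈ 𝓝[≠] 0 := nhdsWithin_le_nhds (isOpen_ball.mem_nhds hζ)
  refine le_of_tendsto_of_tendsto (b := 𝓝[≠] (0 : ℂ))
    ((hg.continuousAt (isOpen_ball.mem_nhds hζ)).norm.tendsto.mono_left nhdsWithin_le_nhds)
    ((continuous_const.mul (Real.continuous_exp.comp continuous_norm)).tendsto 0 |>.mono_left
      nhdsWithin_le_nhds) ?_
  filter_upwards [hball, self_mem_nhdsWithin] with ζ hζ hζ0 using hpunct ζ hζ hζ0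

theorem norm_one_sub_inv_le {p w : ℂ → ℂ} {β : ℝ} (hβ : 0 < β)
    (hp : AnalyticOn ℂ p (ball 0 1)) (hp0 : p 0 = 1) (hpne : ∀ z ∈ ball (0 : ℂ) 1, p z ≠ 0)
    (hw : DifferentiableOn ℂ w (ball 0 1)) (hw0 : w 0 = 0)
    (hwmap : MapsTo w (ball 0 1) (ball 0 1))
    (heq : ∀ ζ ∈ ball (0 : ℂ) 1, β * ζ * deriv p ζ / p ζ ^ 2 = w ζ * exp (w ζ)) {z : ℂ}
    (hz : z ∈ ball (0 : ℂ) 1) :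
    ‖1 - (p z)⁻¹‖ ≤ β⁻¹ * (Real.exp ‖z‖ - 1) := by
  rw [isOpen_ball.analyticOn_iff_analyticOnNhd] at hp
  have hderiv : ∀ ζ ∈ ball (0 : ℂ) 1,
      HasDerivAt (fun x ↦ 1 - (p x)⁻¹) (deriv p ζ / p ζ ^ 2) ζ := fun ζ hζ ↦ by
    simpa [neg_div] using
      ((hp ζ hζ).differentiableAt.hasDerivAt.inv (hpne ζ hζ)).const_sub 1
  have hcont : ContinuousOn (fun ζ ↦ deriv p ζ / p ζ ^ 2) (ball 0 1) :=
    hp.deriv.continuousOn.div (hp.continuousOn.pow 2) fun ζ hζ ↦ pow_ne_zero 2 (hpne ζ hζ)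
  have hbound := norm_sub_le_of_norm_deriv_le_mul_exp
    (fun ζ hζ ↦ (hderiv ζ hζ).differentiableAt.differentiableWithinAt)
    (fun ζ hζ ↦ (hderiv ζ hζ).deriv ▸ norm_le_inv_mul_exp_of_mul_eq_mul_exp hβ hcont hw hw0
      hwmap (fun ζ hζ ↦ by rw [← heq ζ hζ, mul_div_assoc]) hζ) hz
  simpa [hp0] using hbound

theorem norm_log_one_sub_le {u : ℂ} (hu : ‖u‖ < 1) :
    ‖log (1 - u)‖ ≤ -Real.log (1 - ‖u‖) := by
  have hreal := Real.hasSum_pow_div_log_of_abs_lt_one (x := ‖u‖) (by rwa [abs_norm])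
  rw [← norm_neg]
  refine (hasSum_taylorSeries_neg_log' hu).norm_le_of_bounded hreal fun n ↦ ?_
  rw [norm_div, norm_pow]
  norm_cast

theorem subordinate_exp_of_norm_one_sub_inv_lt {p : ℂ → ℂ} (hp : AnalyticOn ℂ p (ball 0 1))
    (hp0 : p 0 = 1) (hpq : ∀ z ∈ ball (0 : ℂ) 1, ‖1 - (p z)⁻¹‖ < 1 - Real.exp (-1)) :
    Subordinate p exp := by
  have hq1 : ∀ z ∈ ball (0 : ℂ) 1, ‖1 - (p z)⁻¹‖ < 1 := fun z hz ↦
    (hpq z hz).trans (sub_lt_self 1 (Real.exp_pos _))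
  have hpne : ∀ z ∈ ball (0 : ℂ) 1, p z ≠ 0 := fun z hz h ↦ by
    simpa [h] using hq1 z hz
  have hslit : ∀ z ∈ ball (0 : ℂ) 1, (p z)⁻¹ ∈ slitPlane := fun z hz ↦ by
    simpa using mem_slitPlane_of_norm_lt_one (z := -(1 - (p z)⁻¹))
      (by rw [norm_neg]; exact hq1 z hz)
  refine ⟨fun z ↦ -log (p z)⁻¹, ?_, by simp [hp0], fun z hz ↦ ?_, fun z hz ↦ ?_⟩
  · rw [isOpen_ball.analyticOn_iff_analyticOnNhd] at hp ⊢
    exact fun z hz ↦ ((analyticAt_clog (hslit z hz)).comp (f := fun x ↦ (p x)⁻¹)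
      ((hp z hz).inv (hpne z hz))).neg
  · have hlog := norm_log_one_sub_le (hq1 z hz)
    have hlt := Real.log_lt_log (Real.exp_pos (-1))
      (show Real.exp (-1) < 1 - ‖1 - (p z)⁻¹‖ by linarith [hpq z hz])
    rw [sub_sub_cancel] at hlog
    rw [Real.log_exp] at hlt
    rw [mem_ball_zero_iff, norm_neg]
    linarith
  · rw [exp_neg, exp_log (inv_ne_zero (hpne z hz)), inv_inv]

/-- if `β ≥ (e − 1)/(1 − 1/e)` and `1 + β·z·p'(z)/p(z)² ≺ 1 + z e^z`,
then `p ≺ e^z`. -/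
theorem stmt_15 (p : ℂ → ℂ) (hp : AnalyticOn ℂ p (ball (0 : ℂ) 1)) (hp0 : p 0 = 1)
    (hpne : ∀ z ∈ ball (0 : ℂ) 1, p z ≠ 0)
    (β : ℝ) (hβ : (Real.exp 1 - 1) / (1 - 1 / Real.exp 1) ≤ β)
    (hsub : Subordinate (fun z => 1 + (β : ℂ) * z * deriv p z / (p z) ^ 2)
      (fun z => 1 + z * Complex.exp z)) :
    Subordinate p (fun z => Complex.exp z) := by
  obtain ⟨w, hw, hw0, hwmap, hweq⟩ := hsub
  have hβe : Real.exp 1 ≤ β := by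
    have he : Real.exp 1 - 1 ≠ 0 := (sub_pos.mpr (Real.one_lt_exp_iff.mpr one_pos)).ne'
    have : (Real.exp 1 - 1) / (1 - 1 / Real.exp 1) = Real.exp 1 := by field_simp
    linarith
  have hβ0 : 0 < β := (Real.exp_pos 1).trans_le hβe
  refine subordinate_exp_of_norm_one_sub_inv_lt hp hp0 fun z hz ↦ ?_
  have hz1 : ‖z‖ < 1 := mem_ball_zero_iff.mp hz
  calc ‖1 - (p z)⁻¹‖
      ≤ β⁻¹ * (Real.exp ‖z‖ - 1) := norm_one_sub_inv_le hβ0 hp hp0 hpne hw.differentiableOn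
        hw0 hwmap (fun ζ hζ ↦ add_left_cancel (hweq ζ hζ)) hz
    _ ≤ (Real.exp 1)⁻¹ * (Real.exp ‖z‖ - 1) := by
        gcongr
        linarith [Real.add_one_le_exp ‖z‖, norm_nonneg z]
    _ < (Real.exp 1)⁻¹ * (Real.exp 1 - 1) := by gcongr
    _ = 1 - Real.exp (-1) := by rw [Real.exp_neg]; field_simp
end
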